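/- arXiv:2109.12303 — 9 statements merged into one kernel-verified Lean document; each statement's English description precedes it below -/
import Mathlib

section
/- Let N ≥ 1 be an integer, let γ ≥ 1 and B > 0 be real numbers, and let ξ_1, …, ξ_N and ω_1, …, ω_N be positive real numbers satisfying ∑_{i=1}^N ω_i ξ_i^γ ≤ B. Then ∑_{i=1}^N 1/ξ_i ≥ B^{−1/γ} (∑_{i=1}^N ω_i^{1/(1+γ)})^{(1+γ)/γ}. -/
/-!
Write `ω i ^ (1 / (1 + γ)) = (ω i * ξ i ^ γ * ξ i ^ (-γ)) ^ (1 / (1 + γ))` and apply Hölder's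
inequality with the exponent triple `1⁻¹ + γ = (1 / (1 + γ))⁻¹`: the sum of these terms is at most
`(∑ ω i * ξ i ^ γ) ^ (1 / (1 + γ)) * (∑ 1 / ξ i) ^ (γ / (1 + γ))`. Raising to the power
`(1 + γ) / γ` and using `∑ ω i * ξ i ^ γ ≤ B` gives the bound.
-/

open Finset Real

theorem sum_rpow_one_div_one_add_le {ι : Type*} (s : Finset ι) {γ : ℝ} (hγ : 0 < γ)
    {ξ ω : ι → ℝ} (hξ : ∀ i ∈ s, 0 < ξ i) (hω : ∀ i ∈ s, 0 ≤ ω i) :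
    ∑ i ∈ s, ω i ^ (1 / (1 + γ)) ≤
      (∑ i ∈ s, ω i * ξ i ^ γ) ^ (1 / (1 + γ)) * (∑ i ∈ s, 1 / ξ i) ^ (γ / (1 + γ)) := by
  have htriple : (1 : ℝ).HolderTriple (1 / γ) (1 / (1 + γ)) :=
    ⟨by simp only [inv_one, one_div, inv_inv], one_pos, by positivity⟩
  have holder := Lr_rpow_le_Lp_mul_Lq_of_nonneg s htriple
    (f := fun i => ω i * ξ i ^ γ) (g := fun i => (ξ i ^ γ)⁻¹)
    (fun i hi => mul_nonneg (hω i hi) (rpow_nonneg (hξ i hi).le γ))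
    (fun i hi => inv_nonneg.2 (rpow_nonneg (hξ i hi).le γ))
  have hcancel : ∀ i ∈ s, (ω i * ξ i ^ γ * (ξ i ^ γ)⁻¹) ^ (1 / (1 + γ)) = ω i ^ (1 / (1 + γ)) :=
    fun i hi => by rw [mul_inv_cancel_right₀ (rpow_pos_of_pos (hξ i hi) γ).ne']
  have hinv : ∀ i ∈ s, ((ξ i ^ γ)⁻¹) ^ (1 / γ) = 1 / ξ i := fun i hi => by
    rw [inv_rpow (rpow_nonneg (hξ i hi).le γ), ← rpow_mul (hξ i hi).le, mul_one_div_cancel hγ.ne',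
      rpow_one, one_div]
  rw [sum_congr rfl hcancel, sum_congr rfl hinv] at holder
  simp only [rpow_one, div_one] at holder
  convert holder using 3
  field_simp

theorem rpow_le_rpow_mul_of_le_rpow_mul_rpow {a b c γ : ℝ} (ha : 0 ≤ a) (hb : 0 ≤ b)
    (hc : 0 ≤ c) (hγ : 0 < γ) (h : c ≤ a ^ (1 / (1 + γ)) * b ^ (γ / (1 + γ))) :
    c ^ ((1 + γ) / γ) ≤ a ^ (1 / γ) * b := by
  have hpow := rpow_le_rpow hc h (by positivity : (0 : ℝ) ≤ (1 + γ) / γ)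
  rwa [mul_rpow (by positivity) (by positivity), ← rpow_mul ha, ← rpow_mul hb,
    show 1 / (1 + γ) * ((1 + γ) / γ) = 1 / γ by field_simp,
    show γ / (1 + γ) * ((1 + γ) / γ) = 1 by field_simp, rpow_one] at hpow

theorem stmt_0_general (N : ℕ) (γ B : ℝ) (hγ : 1 ≤ γ) (hB : 0 < B)
    (ξ ω : ℕ → ℝ) (hξ : ∀ i ∈ Finset.range N, 0 < ξ i)
    (hω : ∀ i ∈ Finset.range N, 0 < ω i)
    (hsum : ∑ i ∈ Finset.range N, ω i * ξ i ^ γ ≤ B) :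
    ∑ i ∈ Finset.range N, 1 / ξ i ≥
      B ^ (-(1 / γ)) * (∑ i ∈ Finset.range N, ω i ^ (1 / (1 + γ))) ^ ((1 + γ) / γ) := by
  have hγ₀ : 0 < γ := zero_lt_one.trans_le hγ
  have hω₀ : ∀ i ∈ range N, 0 ≤ ω i := fun i hi => (hω i hi).le
  have hA : 0 ≤ ∑ i ∈ range N, ω i * ξ i ^ γ :=
    sum_nonneg fun i hi => mul_nonneg (hω₀ i hi) (rpow_nonneg (hξ i hi).le γ)
  have hS : 0 ≤ ∑ i ∈ range N, 1 / ξ i := sum_nonneg fun i hi => (one_div_pos.2 (hξ i hi)).le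
  have hT : 0 ≤ ∑ i ∈ range N, ω i ^ (1 / (1 + γ)) :=
    sum_nonneg fun i hi => rpow_nonneg (hω₀ i hi) _
  have holder := rpow_le_rpow_mul_of_le_rpow_mul_rpow hA hS hT hγ₀
    (sum_rpow_one_div_one_add_le (range N) hγ₀ hξ hω₀)
  calc B ^ (-(1 / γ)) * (∑ i ∈ range N, ω i ^ (1 / (1 + γ))) ^ ((1 + γ) / γ)
      ≤ B ^ (-(1 / γ)) * (B ^ (1 / γ) * ∑ i ∈ range N, 1 / ξ i) := by
        gcongr
        exact holder.trans (by gcongr)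
    _ = ∑ i ∈ range N, 1 / ξ i := by
        rw [← mul_assoc, ← rpow_add hB, neg_add_cancel, rpow_zero, one_mul]

theorem stmt_0 (N : ℕ) (hN : 1 ≤ N) (γ B : ℝ) (hγ : 1 ≤ γ) (hB : 0 < B)
    (ξ ω : ℕ → ℝ) (hξ : ∀ i ∈ Finset.range N, 0 < ξ i)
    (hω : ∀ i ∈ Finset.range N, 0 < ω i)
    (hsum : ∑ i ∈ Finset.range N, ω i * ξ i ^ γ ≤ B) :
    ∑ i ∈ Finset.range N, 1 / ξ i ≥
      B ^ (-(1 / γ)) * (∑ i ∈ Finset.range N, ω i ^ (1 / (1 + γ))) ^ ((1 + γ) / γ) :=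
  stmt_0_general N γ B hγ hB ξ ω hξ hω hsum
end

section
/- Let θ > 0 and α, β ≥ 0 be real numbers with αβ < 1, and let (η_k)_{k≥1} be a sequence of positive real numbers satisfying η_k ≥ θ (∑_{i=1}^k η_i^α)^β for every k ≥ 1. Then η_k ≥ θ^{1/(1−αβ)} (αβ + (1−αβ)k)^{β/(1−αβ)} for every k ≥ 1. -/
/-!
Put `c = αβ` and `S k = ∑_{i ≤ k} η_i ^ α`. Raising the hypothesis to the power `α` gives the
recurrence `θ ^ α * S k ^ c ≤ S k - S (k - 1)`, and after rescaling `S` by `A = θ ^ (α / (1 - c))`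
it becomes `u k ^ c ≤ u k - u (k - 1)`. The map `x ↦ x - x ^ c` is strictly increasing on
`[1, ∞)`, and by convexity of `x ↦ x ^ (1 / (1 - c))` the sequence
`M k = (c + (1 - c) k) ^ (1 / (1 - c))` satisfies `M k - M k ^ c ≤ M (k - 1)`; comparing the two
recurrences gives `M k ≤ u k` by induction. Substituting `S k ≥ A * M k` back into the hypothesis
yields the bound on `η k`.
-/

open Real Set

namespace Real

theorem rpow_sub_mul_rpow_le_sub_rpow {F d p : ℝ} (hF : 0 < F) (hdF : d ≤ F) (hp : 1 ≤ p) :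
    F ^ p - p * d * F ^ (p - 1) ≤ (F - d) ^ p := by
  have hs : -1 ≤ -(d / F) := by linarith [(div_le_one hF).mpr hdF]
  have hB := mul_le_mul_of_nonneg_left (one_add_mul_self_le_rpow_one_add hs hp)
    (rpow_nonneg hF.le p)
  have hFd : F * (1 + -(d / F)) = F - d := by field_simp; ring
  rw [← mul_rpow hF.le (by linarith), hFd] at hB
  rw [rpow_sub_one hF.ne']
  field_simp at hB ⊢
  linarith

theorem rpow_sub_rpow_le_mul_rpow_sub_one {x y c : ℝ} (hy : 0 < y) (hyx : y ≤ x) (hc0 : 0 ≤ c)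
    (hc1 : c ≤ 1) : x ^ c - y ^ c ≤ c * y ^ (c - 1) * (x - y) := by
  have hs : -1 ≤ (x - y) / y := by linarith [div_nonneg (sub_nonneg.mpr hyx) hy.le]
  have hB := mul_le_mul_of_nonneg_left (rpow_one_add_le_one_add_mul_self hs hc0 hc1)
    (rpow_nonneg hy.le c)
  rw [← mul_rpow hy.le (by linarith), mul_add, mul_one, mul_div_cancel₀ _ hy.ne',
    add_sub_cancel] at hB
  rw [rpow_sub_one hy.ne']
  field_simp at hB ⊢
  linarith

theorem strictMonoOn_sub_rpow {c : ℝ} (hc0 : 0 ≤ c) (hc1 : c < 1) :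
    StrictMonoOn (fun x : ℝ => x - x ^ c) (Ici 1) := by
  intro y (hy : 1 ≤ y) x _ hyx
  have hconc := rpow_sub_rpow_le_mul_rpow_sub_one (by linarith) hyx.le hc0 hc1.le
  have hyc : c * y ^ (c - 1) ≤ c :=
    mul_le_of_le_one_right hc0 (rpow_le_one_of_one_le_of_nonpos hy (by linarith))
  have : c * y ^ (c - 1) * (x - y) ≤ c * (x - y) := by gcongr
  dsimp only
  nlinarith

end Real

theorem rpow_affine_le_of_rpow_le_sub {c : ℝ} (hc0 : 0 ≤ c) (hc1 : c < 1) {u : ℕ → ℝ}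
    (h0 : 0 ≤ u 0) (hpos : ∀ k, 0 < u (k + 1)) (hstep : ∀ k, u (k + 1) ^ c ≤ u (k + 1) - u k) :
    ∀ k, 1 ≤ k → (c + (1 - c) * k) ^ (1 / (1 - c)) ≤ u k := by
  have hδ : 0 < 1 - c := by linarith
  intro k hk
  induction k, hk using Nat.le_induction with
  | base =>
    rw [Nat.cast_one, mul_one, add_sub_cancel, one_rpow]
    by_contra! h
    have hlt : u 1 ^ (1 : ℝ) < u 1 ^ c := rpow_lt_rpow_of_exponent_gt (hpos 0) h hc1
    rw [rpow_one] at hlt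
    linarith [hstep 0]
  | succ k hk ih =>
    have hk1 : 1 ≤ c + (1 - c) * k := by
      nlinarith [(Nat.one_le_cast (α := ℝ)).mpr hk]
    have hu : 1 ≤ u (k + 1) := by
      have := one_le_rpow hk1 (by positivity : 0 ≤ 1 / (1 - c))
      linarith [hstep k, rpow_pos_of_pos (hpos k) c]
    set F : ℝ := c + (1 - c) * ↑(k + 1)
    have hF : F - (1 - c) = c + (1 - c) * k := by simp only [F]; push_cast; ring
    have hM : 1 ≤ F ^ (1 / (1 - c)) := one_le_rpow (by linarith) (by positivity)
    refine ((strictMonoOn_sub_rpow hc0 hc1).le_iff_le hM hu).mp ?_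
    calc F ^ (1 / (1 - c)) - (F ^ (1 / (1 - c))) ^ c
        = F ^ (1 / (1 - c)) - 1 / (1 - c) * (1 - c) * F ^ (1 / (1 - c) - 1) := by
          rw [← rpow_mul (by linarith)]
          field_simp
          ring_nf
      _ ≤ (F - (1 - c)) ^ (1 / (1 - c)) :=
          rpow_sub_mul_rpow_le_sub_rpow (by linarith) (by linarith)
            (by rw [le_div_iff₀ hδ]; linarith)
      _ ≤ u k := hF ▸ ih
      _ ≤ u (k + 1) - u (k + 1) ^ c := by linarith [hstep k]

theorem mul_rpow_affine_le_of_mul_rpow_le_sub {a c : ℝ} (ha : 0 < a) (hc0 : 0 ≤ c) (hc1 : c < 1)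
    {S : ℕ → ℝ} (h0 : 0 ≤ S 0) (hpos : ∀ k, 0 < S (k + 1))
    (hstep : ∀ k, a * S (k + 1) ^ c ≤ S (k + 1) - S k) :
    ∀ k, 1 ≤ k → (a * (c + (1 - c) * k)) ^ (1 / (1 - c)) ≤ S k := by
  have hδ : 1 - c ≠ 0 := by linarith
  set A := a ^ (1 / (1 - c))
  have hA : 0 < A := rpow_pos_of_pos ha _
  have hAc : A ^ (1 - c) = a := by
    rw [← rpow_mul ha.le, one_div_mul_cancel hδ, rpow_one]
  have hnorm : ∀ k, (S (k + 1) / A) ^ c ≤ S (k + 1) / A - S k / A := by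
    intro k
    rw [← sub_div, le_div_iff₀ hA, div_rpow (hpos k).le hA.le, div_mul_eq_mul_div,
      div_le_iff₀ (rpow_pos_of_pos hA c)]
    calc S (k + 1) ^ c * A = a * S (k + 1) ^ c * A ^ c := by
          rw [← hAc, mul_right_comm, ← rpow_add hA, sub_add_cancel, rpow_one, mul_comm]
      _ ≤ (S (k + 1) - S k) * A ^ c := by gcongr; exact hstep k
  intro k hk
  have := rpow_affine_le_of_rpow_le_sub hc0 hc1 (u := fun k => S k / A)
    (div_nonneg h0 hA.le) (fun k => div_pos (hpos k) hA) hnorm k hk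
  rwa [le_div_iff₀ hA, mul_comm, ← mul_rpow ha.le (by nlinarith)] at this

theorem stmt_1 (θ α β : ℝ) (hθ : 0 < θ) (hα : 0 ≤ α) (hβ : 0 ≤ β) (hαβ : α * β < 1)
    (η : ℕ → ℝ) (hη : ∀ k : ℕ, 1 ≤ k → 0 < η k)
    (hineq : ∀ k : ℕ, 1 ≤ k → η k ≥ θ * (∑ i ∈ Finset.Icc 1 k, η i ^ α) ^ β) :
    ∀ k : ℕ, 1 ≤ k →
      η k ≥ θ ^ (1 / (1 - α * β)) *
        (α * β + (1 - α * β) * (k : ℝ)) ^ (β / (1 - α * β)) := by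
  set S : ℕ → ℝ := fun k => ∑ i ∈ Finset.Icc 1 k, η i ^ α
  have hpos : ∀ k, 0 < S (k + 1) := fun k =>
    Finset.sum_pos (fun i hi => rpow_pos_of_pos (hη i (Finset.mem_Icc.mp hi).1) α)
      (Finset.nonempty_Icc.mpr (by omega))
  have hstep : ∀ k, θ ^ α * S (k + 1) ^ (α * β) ≤ S (k + 1) - S k := by
    intro k
    rw [show S (k + 1) - S k = η (k + 1) ^ α from
      sub_eq_of_eq_add' (Finset.sum_Icc_succ_top (by omega) _), mul_comm α β,
      rpow_mul (hpos k).le, ← mul_rpow hθ.le (rpow_nonneg (hpos k).le β)]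
    exact rpow_le_rpow (by have := hpos k; positivity) (hineq (k + 1) (by omega)) hα
  intro k hk
  have hS := mul_rpow_affine_le_of_mul_rpow_le_sub (rpow_pos_of_pos hθ α) (mul_nonneg hα hβ)
    hαβ (by simp [S]) hpos hstep k hk
  have hδ : 1 - α * β ≠ 0 := by linarith
  have hk1 : 0 ≤ α * β + (1 - α * β) * (k : ℝ) := by nlinarith [mul_nonneg hα hβ]
  have hexp : 1 / (1 - α * β) = 1 + α * (1 / (1 - α * β)) * β := by field_simp; ring
  calc θ ^ (1 / (1 - α * β)) * (α * β + (1 - α * β) * k) ^ (β / (1 - α * β))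
      = θ * ((θ ^ α * (α * β + (1 - α * β) * k)) ^ (1 / (1 - α * β))) ^ β := by
        rw [mul_rpow (by positivity) hk1, mul_rpow (by positivity) (by positivity),
          ← rpow_mul hθ.le, ← rpow_mul hθ.le, ← rpow_mul hk1, ← mul_assoc,
          ← rpow_one_add' hθ.le (by rw [← hexp]; positivity), ← hexp, one_div_mul_eq_div]
    _ ≤ θ * S k ^ β := by gcongr
    _ ≤ η k := hineq k hk
end

section
/- Let p ≥ 1 be an integer, H > 0, β ∈ [0,1), let x̄, T ∈ E and let g be a subgradient of ψ at T such that (T, g) ∈ A(x̄, β). Then ⟨∇f(T) + g, x̄ − T⟩ ≥ (H/(1+β)) ‖T − x̄‖^{p+1}. -/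
open scoped RealInnerProductSpace

variable {E : Type*} [NormedAddCommGroup E] [InnerProductSpace ℝ E] [FiniteDimensional ℝ E]

/-- `g` is a subgradient of `ψ` at `T`. -/
def IsSubgrad (ψ : E → ℝ) (T g : E) : Prop := ∀ y, ψ T + ⟪g, y - T⟫ ≤ ψ y

/-- `(T, g)` is an acceptable solution of the `p`-th order proximal-point problem at `xbar`,
i.e. `(T, g) ∈ A(xbar, β)`. -/
def InA (f' : E → E) (ψ : E → ℝ) (p : ℕ) (H β : ℝ) (xbar T g : E) : Prop :=
  IsSubgrad ψ T g ∧
    ‖f' T + g + (H * ‖T - xbar‖ ^ (p - 1)) • (T - xbar)‖ ≤ β * ‖f' T + g‖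

theorem stmt_3 (f ψ : E → ℝ) (f' : E → E)
    (hf : ConvexOn ℝ Set.univ f) (hψ : ConvexOn ℝ Set.univ ψ)
    (hf' : ∀ x, HasGradientAt f (f' x) x)
    (p : ℕ) (hp : 1 ≤ p) (H β : ℝ) (hH : 0 < H) (hβ : β ∈ Set.Ico (0 : ℝ) 1)
    (xbar T g : E) (hA : InA f' ψ p H β xbar T g) :
    ⟪f' T + g, xbar - T⟫ ≥ (H / (1 + β)) * ‖T - xbar‖ ^ (p + 1) := by
  obtain ⟨hβ0, hβ1⟩ := hβ
  obtain ⟨-, hineq⟩ := hA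
  set v := f' T + g with hv
  set r := T - xbar with hrdef
  set c := H * ‖r‖ ^ (p - 1) with hc
  by_cases h0 : r = 0
  · have hT : T = xbar := by rwa [sub_eq_zero] at h0
    simp [hT, ge_iff_le, h0, zero_pow (by omega : p + 1 ≠ 0)]
  · have hrpos : 0 < ‖r‖ := norm_pos_iff.mpr h0
    have hcpos : 0 < c := mul_pos hH (pow_pos hrpos _)
    have hnorm_smul : ‖c • r‖ = c * ‖r‖ := by
      rw [norm_smul, Real.norm_eq_abs, abs_of_pos hcpos]
    -- squared inequality
    have hsq : ‖v + c • r‖ ^ 2 ≤ β ^ 2 * ‖v‖ ^ 2 := by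
      nlinarith [norm_nonneg (v + c • r), norm_nonneg v, hineq]
    have hexp : ‖v + c • r‖ ^ 2 = ‖v‖ ^ 2 + 2 * (c * ⟪v, r⟫) + (c * ‖r‖) ^ 2 := by
      rw [← hnorm_smul, ← real_inner_self_eq_norm_sq, ← real_inner_self_eq_norm_sq,
        ← real_inner_self_eq_norm_sq, real_inner_add_add_self, real_inner_smul_right]
    have hA' : ‖v‖ ^ 2 + 2 * (c * ⟪v, r⟫) + (c * ‖r‖) ^ 2 ≤ β ^ 2 * ‖v‖ ^ 2 := by
      rw [← hexp]; exact hsq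
    have hB : c * ‖r‖ ≤ (1 + β) * ‖v‖ := by
      have h1 : ‖c • r‖ ≤ ‖v + c • r‖ + ‖v‖ := by
        simpa using norm_sub_le (v + c • r) v
      calc c * ‖r‖ = ‖c • r‖ := hnorm_smul.symm
        _ ≤ ‖v + c • r‖ + ‖v‖ := h1
        _ ≤ β * ‖v‖ + ‖v‖ := by linarith
        _ = (1 + β) * ‖v‖ := by ring
    have hgoal : -⟪v, r⟫ ≥ (c / (1 + β)) * ‖r‖ ^ 2 := by
      rw [ge_iff_le, div_mul_eq_mul_div, div_le_iff₀ (by linarith : (0:ℝ) < 1 + β)]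
      nlinarith [mul_nonneg (mul_nonneg (by linarith : (0:ℝ) ≤ 1 - β)
        (by linarith : (0:ℝ) ≤ (1 + β) * ‖v‖ - c * ‖r‖))
        (by positivity : (0:ℝ) ≤ (1 + β) * ‖v‖ + c * ‖r‖), hcpos.le, hrpos.le]
    have hinner : ⟪v, xbar - T⟫ = -⟪v, r⟫ := by
      rw [hrdef, show xbar - T = -(T - xbar) by abel, inner_neg_right]
    rw [hinner]
    have hpow : ‖r‖ ^ (p + 1) = ‖r‖ ^ (p - 1) * ‖r‖ ^ 2 := by
      rw [← pow_add]; congr 1; omega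
    rw [hpow]
    calc (H / (1 + β)) * (‖r‖ ^ (p - 1) * ‖r‖ ^ 2) = (c / (1 + β)) * ‖r‖ ^ 2 := by
          rw [hc]; ring
      _ ≤ -⟪v, r⟫ := hgoal
end

section
/- Let p ≥ 1 be an integer, H > 0, β ∈ [0, 1/p], let x̄, T ∈ E and let g be a subgradient of ψ at T such that (T, g) ∈ A(x̄, β). Then ⟨∇f(T) + g, x̄ − T⟩ ≥ ((1−β)/H)^{1/p} ‖∇f(T) + g‖^{(p+1)/p}. -/
open scoped RealInnerProductSpace

variable {E : Type*} [NormedAddCommGroup E] [InnerProductSpace ℝ E] [FiniteDimensional ℝ E]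

set_option maxHeartbeats 1000000 in
theorem stmt_4 (f ψ : E → ℝ) (f' : E → E)
    (hf : ConvexOn ℝ Set.univ f) (hψ : ConvexOn ℝ Set.univ ψ)
    (hf' : ∀ x, HasGradientAt f (f' x) x)
    (p : ℕ) (hp : 1 ≤ p) (H β : ℝ) (hH : 0 < H)
    (hβ : β ∈ Set.Icc (0 : ℝ) (1 / (p : ℝ)))
    (xbar T g : E) (hA : InA f' ψ p H β xbar T g) :
    ⟪f' T + g, xbar - T⟫ ≥
      ((1 - β) / H) ^ ((1 : ℝ) / p) * ‖f' T + g‖ ^ (((p : ℝ) + 1) / p) := by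
  obtain ⟨hsub, hle⟩ := hA
  obtain ⟨q, rfl⟩ : ∃ q, p = q + 1 := ⟨p - 1, (Nat.succ_pred_eq_of_pos hp).symm⟩
  clear hp hsub hf hψ hf'
  obtain ⟨hβ0, hβ2⟩ := hβ
  set v := f' T + g with hv
  set d := xbar - T with hd
  have hdr : T - xbar = -d := by rw [hd]; abel
  set r := ‖d‖ with hr
  have hr0 : 0 ≤ r := norm_nonneg _
  set s := H * r ^ q with hs
  set u := v - s • d with hu
  set W := ‖v‖ with hW
  have hW0 : 0 ≤ W := norm_nonneg _
  set P := ((q + 1 : ℕ) : ℝ) with hP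
  have hP1 : (1 : ℝ) ≤ P := by rw [hP]; exact_mod_cast Nat.one_le_iff_ne_zero.mpr (by simp)
  have hP0 : (0 : ℝ) < P := lt_of_lt_of_le one_pos hP1
  have hβ2' : β ≤ 1 / P := hβ2
  have hβP : β * P ≤ 1 := by
    rw [le_div_iff₀ hP0] at hβ2'; linarith
  have hβ1 : β ≤ 1 := by nlinarith
  have hule : ‖u‖ ≤ β * W := by
    have he : f' T + g + (H * ‖T - xbar‖ ^ (q + 1 - 1)) • (T - xbar) = u := by
      rw [hdr, norm_neg, hu, ← hr, ← hv]
      simp only [Nat.add_sub_cancel, smul_neg, ← hs]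
      abel
    rwa [he] at hle
  -- v = u + s • d
  have hvu : v = u + s • d := by rw [hu]; abel
  have hinner : ⟪v, d⟫ = ⟪u, d⟫ + s * r ^ 2 := by
    rw [hvu, inner_add_left, real_inner_smul_left, real_inner_self_eq_norm_sq, ← hr]
  have hs0 : 0 ≤ s := by rw [hs]; positivity
  have hnormsq : W ^ 2 = ‖u‖ ^ 2 + 2 * (s * ⟪u, d⟫) + s ^ 2 * r ^ 2 := by
    rw [hW, hvu, norm_add_sq_real, real_inner_smul_right, norm_smul,
      Real.norm_eq_abs, abs_of_nonneg hs0, ← hr, mul_pow]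
  have htri : W ≤ ‖u‖ + s * r := by
    have h1 : W ≤ ‖u‖ + ‖s • d‖ := by rw [hW, hvu]; exact norm_add_le _ _
    have h2 : ‖s • d‖ = s * r := by
      rw [norm_smul, Real.norm_eq_abs, abs_of_nonneg hs0, ← hr]
    linarith
  have hdz : r = 0 → ⟪v, d⟫ = 0 := by
    intro h
    have : d = 0 := norm_eq_zero.mp (hr ▸ h)
    rw [this, inner_zero_right]
  clear hle hv hd hdr hu
  clear_value P u W s r d v
  rw [ge_iff_le]
  rcases eq_or_lt_of_le hr0 with hrz | hrpos
  · -- r = 0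
    rw [hdz hrz.symm]
    have hu0 : W ≤ ‖u‖ + s * 0 := by rw [hrz]; exact htri
    rcases eq_or_lt_of_le hW0 with hWz | hWpos
    · have : W ^ ((P + 1) / P) = 0 := by
        rw [← hWz, Real.zero_rpow (by positivity)]
      rw [this, mul_zero]
    · have hβge : 1 ≤ β := by nlinarith [hu0, hule]
      have hβeq : β = 1 := le_antisymm hβ1 hβge
      rw [hβeq]
      norm_num
      rw [Real.zero_rpow (by positivity)]
      simp
  · -- r > 0
    set a := s * r with ha
    have hspos : 0 < s := by rw [hs]; positivity
    have hapos : 0 < a := mul_pos hspos hrpos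
    have harp : a = H * r ^ (q + 1) := by rw [ha, hs, pow_succ]; ring
    have hsr : s * r = a := ha.symm
    clear_value a
    have hu2 : ‖u‖ ^ 2 ≤ β ^ 2 * W ^ 2 := by nlinarith [norm_nonneg u]
    have hQge : (1 - β ^ 2) * W ^ 2 - a ^ 2 ≤ 2 * s * ⟪u, d⟫ := by
      have : a ^ 2 = s ^ 2 * r ^ 2 := by rw [ha]; ring
      nlinarith
    have hvd_ge : r * ((1 - β ^ 2) * W ^ 2 + a ^ 2) / (2 * a) ≤ ⟪v, d⟫ := by
      rw [div_le_iff₀ (by positivity), hinner]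
      have hmul := mul_le_mul_of_nonneg_left hQge hr0
      have h3 : r * (2 * s * ⟪u, d⟫) = 2 * a * ⟪u, d⟫ := by rw [← hsr]; ring
      have h4 : (⟪u, d⟫ + s * r ^ 2) * (2 * a) = 2 * a * ⟪u, d⟫ + 2 * a ^ 2 * r := by
        rw [← hsr]; ring
      linarith [hmul, h3, h4]
    rcases eq_or_lt_of_le hβ1 with hβeq | hβlt
    · -- β = 1
      rw [← hβeq]
      norm_num
      rw [Real.zero_rpow (by positivity)]
      have h0 : (0:ℝ) ≤ r * ((1 - β ^ 2) * W ^ 2 + a ^ 2) / (2 * a) := by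
        have : 1 - β ^ 2 = 0 := by rw [hβeq]; norm_num
        rw [this]; positivity
      simp only [zero_mul]
      linarith
    · -- β < 1
      have h1β : 0 < 1 - β := by linarith
      rcases eq_or_lt_of_le hW0 with hWz | hWpos
      · have hv0 : v = 0 := by
          have : ‖v‖ = 0 := by rw [← hW]; exact hWz.symm
          exact norm_eq_zero.mp this
        have : W ^ ((P + 1) / P) = 0 := by
          rw [← hWz, Real.zero_rpow (by positivity)]
        rw [this, mul_zero, hv0, inner_zero_left]
      · -- main case
        set c := (1 - β) * W / a with hc
        have hc0 : 0 < c := by rw [hc]; positivity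
        have haW : (1 - β) * W ≤ a := by linarith [htri, hule]
        have hc1 : c ≤ 1 := by rw [hc, div_le_one hapos]; linarith
        have hca : c * a = (1 - β) * W := by
          rw [hc]; field_simp
        have hcr : c * r ^ (q + 1) = (1 - β) / H * W := by
          have h5 : c * (H * r ^ (q + 1)) = (1 - β) * W := by rw [← harp]; exact hca
          field_simp
          linear_combination h5
        clear_value c
        -- Bernoulli via weighted AM-GM
        have hB : c ^ ((1 : ℝ) / P) ≤ (1 / P) * c + (1 - 1 / P) := by
          have := Real.geom_mean_le_arith_mean2_weighted
            (by positivity : (0:ℝ) ≤ 1 / P) (by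
              have : 1 / P ≤ 1 := by rw [div_le_one hP0]; exact hP1
              linarith : (0:ℝ) ≤ 1 - 1 / P) hc0.le (zero_le_one)
            (by ring)
          simpa using this
        have key : 2 * c * (P + c - 1) ≤ P * (1 + β) * c ^ 2 + P * (1 - β) := by
          nlinarith [mul_nonneg (mul_nonneg (sub_nonneg.2 hc1) (sub_nonneg.2 hc1))
              (sub_nonneg.2 hP1),
            mul_nonneg (mul_nonneg (sub_nonneg.2 hc1) (by linarith : (0:ℝ) ≤ 1 + c))
              (by linarith : (0:ℝ) ≤ 1 - β * P)]
        have key2 : 2 * a * W * ((1 / P) * c + (1 - 1 / P)) ≤ (1 - β ^ 2) * W ^ 2 + a ^ 2 := by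
          have hmul := mul_le_mul_of_nonneg_left key
            (show (0:ℝ) ≤ a * W / (c * P) by positivity)
          have e1 : a * W / (c * P) * (2 * c * (P + c - 1)) =
              2 * a * W * ((1 / P) * c + (1 - 1 / P)) := by
            field_simp; ring
          have e2 : a * W / (c * P) * (P * (1 + β) * c ^ 2 + P * (1 - β)) =
              (1 - β ^ 2) * W ^ 2 + a ^ 2 := by
            rw [div_mul_eq_mul_div, div_eq_iff (by positivity : (c*P) ≠ 0)]
            linear_combination ((1 + β) * W * c * P - a * P) * hca
          rw [e1, e2] at hmul
          exact hmul
        have key3 : 2 * a * W * c ^ ((1:ℝ) / P) ≤ (1 - β ^ 2) * W ^ 2 + a ^ 2 := by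
          have := mul_le_mul_of_nonneg_left hB (by positivity : (0:ℝ) ≤ 2 * a * W)
          linarith
        -- rewrite the RHS of the goal
        have hrw : ((1 - β) / H) ^ ((1 : ℝ) / P) * W ^ ((P + 1) / P) =
            c ^ ((1:ℝ) / P) * r * W := by
          have hrpow : (r ^ (q + 1) : ℝ) ^ ((1:ℝ) / P) = r := by
            rw [← Real.rpow_natCast r (q + 1), ← hP, ← Real.rpow_mul hr0,
              mul_one_div, div_self (ne_of_gt hP0), Real.rpow_one]
          have h1 : c ^ ((1:ℝ) / P) * r = ((1 - β) / H) ^ ((1:ℝ) / P) * W ^ ((1:ℝ) / P) := by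
            rw [← hrpow, ← Real.mul_rpow hc0.le (by positivity), hcr,
              Real.mul_rpow (by positivity) hW0]
          have h2 : W ^ ((P + 1) / P) = W ^ ((1:ℝ) / P) * W := by
            rw [show (P + 1) / P = 1 / P + 1 by field_simp; ring,
              Real.rpow_add hWpos, Real.rpow_one]
          rw [h2, ← mul_assoc, ← h1]
        rw [hrw]
        calc c ^ ((1:ℝ) / P) * r * W
            ≤ r * ((1 - β ^ 2) * W ^ 2 + a ^ 2) / (2 * a) := by
              rw [le_div_iff₀ (by positivity)]
              calc c ^ ((1:ℝ) / P) * r * W * (2 * a)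
                  = r * (2 * a * W * c ^ ((1:ℝ) / P)) := by ring
                _ ≤ r * ((1 - β ^ 2) * W ^ 2 + a ^ 2) :=
                    mul_le_mul_of_nonneg_left key3 hr0
          _ ≤ ⟪v, d⟫ := hvd_ge
end

section
/- Let p ≥ 1 be an integer, H > 0, β ∈ [0, 1/2), let x̄, T ∈ E, let g be a subgradient of ψ at T such that (T, g) ∈ A(x̄, β), and let x* ∈ E be a minimizer of F = f + ψ (i.e. F(x*) ≤ F(x) for all x ∈ E). Then ‖T − x*‖² ≤ ((1−β)²/(1−2β)) ‖x̄ − x*‖². In particular, if β ≤ 3/8, then ‖T − x*‖ ≤ (5/4) ‖x̄ − x*‖. -/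
open scoped RealInnerProductSpace

variable {E : Type*} [NormedAddCommGroup E] [InnerProductSpace ℝ E] [FiniteDimensional ℝ E]

/-!
The residual `v = ∇f(T) + g` is a subgradient of `F` at `T`, so minimality of `x*` gives
`⟪v, T - x*⟫ ≥ 0`. Writing `L = H ‖T - x̄‖ ^ (p - 1)`, acceptability `‖v + L (T - x̄)‖ ≤ β ‖v‖`
gives both `L ⟪T - x̄, T - x*⟫ ≤ β ‖v‖ ‖T - x*‖` and `(1 - β) ‖v‖ ≤ L ‖T - x̄‖`; eliminating `‖v‖`
yields `(1 - β) ⟪T - x̄, T - x*⟫ ≤ β ‖T - x̄‖ ‖T - x*‖`. Expanding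
`‖x̄ - x*‖² = ‖(T - x*) - (T - x̄)‖²` and completing a square then gives the bound.
-/

theorem ConvexOn.add_fderiv_sub_le {V : Type*} [NormedAddCommGroup V] [NormedSpace ℝ V]
    {f : V → ℝ} {f' : V →L[ℝ] ℝ} {x : V} (hf : ConvexOn ℝ Set.univ f) (hx : HasFDerivAt f f' x)
    (y : V) : f x + f' (y - x) ≤ f y := by
  set c : ℝ →ᵃ[ℝ] V := AffineMap.lineMap x y
  have hderiv : HasDerivAt (f ∘ c) (f' (y - x)) 0 :=
    (by simpa [c] using hx : HasFDerivAt f f' (c 0)).comp_hasDerivAt 0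
      AffineMap.hasDerivAt_lineMap
  have := (hf.comp_affineMap c).le_slope_of_hasDerivAt (Set.mem_univ 0) (Set.mem_univ 1)
    one_pos hderiv
  simp only [slope_def_field, Function.comp_apply, AffineMap.lineMap_apply_one,
    AffineMap.lineMap_apply_zero, sub_zero, div_one, c] at this
  linarith [map_sub f' y x]

section InnerProductSpace

variable {V : Type*} [NormedAddCommGroup V] [InnerProductSpace ℝ V]

theorem ConvexOn.isSubgrad_of_hasGradientAt [CompleteSpace V] {f : V → ℝ} {x v : V}
    (hf : ConvexOn ℝ Set.univ f) (hx : HasGradientAt f v x) : IsSubgrad f x v := fun y => by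
  simpa using hf.add_fderiv_sub_le (hasGradientAt_iff_hasFDerivAt.1 hx) y

theorem IsSubgrad.add {φ ψ : V → ℝ} {T u g : V} (hφ : IsSubgrad φ T u) (hψ : IsSubgrad ψ T g) :
    IsSubgrad (φ + ψ) T (u + g) := fun y => by
  have := add_le_add (hφ y) (hψ y)
  simp only [Pi.add_apply, inner_add_left]
  linarith

theorem IsSubgrad.inner_sub_nonneg_of_le {φ : V → ℝ} {T g y : V} (h : IsSubgrad φ T g)
    (hy : φ y ≤ φ T) : 0 ≤ ⟪g, T - y⟫ := by
  have := h y
  rw [← neg_sub, inner_neg_right] at this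
  linarith

theorem inner_mul_le_of_norm_add_smul_le {v u w : V} {L β : ℝ} (hL : 0 < L) (hβ₀ : 0 ≤ β)
    (hβ₁ : β ≤ 1) (hs : ‖v + L • u‖ ≤ β * ‖v‖) (hvw : 0 ≤ ⟪v, w⟫) :
    (1 - β) * ⟪u, w⟫ ≤ β * ‖u‖ * ‖w‖ := by
  have hinner : L * ⟪u, w⟫ ≤ β * ‖v‖ * ‖w‖ := by
    have : ⟪v + L • u, w⟫ = ⟪v, w⟫ + L * ⟪u, w⟫ := by
      rw [inner_add_left, real_inner_smul_left]
    linarith [real_inner_le_norm (v + L • u) w, mul_le_mul_of_nonneg_right hs (norm_nonneg w)]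
  have hnorm : (1 - β) * ‖v‖ ≤ L * ‖u‖ := by
    have : ‖v‖ ≤ ‖v + L • u‖ + L * ‖u‖ := by
      simpa [norm_smul, abs_of_pos hL] using norm_sub_le (v + L • u) (L • u)
    linarith
  refine le_of_mul_le_mul_left ?_ hL
  calc L * ((1 - β) * ⟪u, w⟫) = (1 - β) * (L * ⟪u, w⟫) := by ring
    _ ≤ (1 - β) * (β * ‖v‖ * ‖w‖) := by gcongr
    _ = β * ‖w‖ * ((1 - β) * ‖v‖) := by ring
    _ ≤ β * ‖w‖ * (L * ‖u‖) := by gcongr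
    _ = L * (β * ‖u‖ * ‖w‖) := by ring

theorem mul_norm_sq_le_of_mul_inner_le {u w : V} {β : ℝ} (hβ : β ≤ 1)
    (h : (1 - β) * ⟪u, w⟫ ≤ β * ‖u‖ * ‖w‖) :
    (1 - 2 * β) * ‖w‖ ^ 2 ≤ (1 - β) ^ 2 * ‖w - u‖ ^ 2 := by
  rw [norm_sub_sq_real, real_inner_comm]
  nlinarith [mul_le_mul_of_nonneg_left h (sub_nonneg.2 hβ), sq_nonneg ((1 - β) * ‖u‖ - β * ‖w‖)]

end InnerProductSpace

theorem one_sub_sq_div_one_sub_two_mul_le {β : ℝ} (hβ₀ : 0 ≤ β) (hβ : β ≤ 3 / 8) :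
    (1 - β) ^ 2 / (1 - 2 * β) ≤ (5 / 4) ^ 2 := by
  rw [div_le_iff₀ (by linarith)]
  nlinarith [mul_nonneg (by linarith : (0 : ℝ) ≤ 3 - 8 * β) (by linarith : (0 : ℝ) ≤ 3 + 2 * β)]

theorem stmt_5_general (f ψ : E → ℝ) (f' : E → E)
    (hf : ConvexOn ℝ Set.univ f)
    (hf' : ∀ x, HasGradientAt f (f' x) x)
    (p : ℕ) (H β : ℝ) (hH : 0 < H)
    (hβ : β ∈ Set.Ico (0 : ℝ) (1 / 2))
    (xbar T g : E) (hA : InA f' ψ p H β xbar T g)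
    (xs : E) (hxs : ∀ x, f xs + ψ xs ≤ f x + ψ x) :
    ‖T - xs‖ ^ 2 ≤ ((1 - β) ^ 2 / (1 - 2 * β)) * ‖xbar - xs‖ ^ 2 ∧
      (β ≤ 3 / 8 → ‖T - xs‖ ≤ (5 / 4) * ‖xbar - xs‖) := by
  obtain ⟨hβ₀, hβ₁⟩ := hβ
  have hv : 0 ≤ ⟪f' T + g, T - xs⟫ :=
    ((hf.isSubgrad_of_hasGradientAt (hf' T)).add hA.1).inner_sub_nonneg_of_le (hxs T)
  have hcos : (1 - β) * ⟪T - xbar, T - xs⟫ ≤ β * ‖T - xbar‖ * ‖T - xs‖ := by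
    rcases eq_or_ne T xbar with rfl | hne
    · simp
    · have hd : 0 < ‖T - xbar‖ := norm_pos_iff.2 (sub_ne_zero.2 hne)
      exact inner_mul_le_of_norm_add_smul_le (mul_pos hH (pow_pos hd _)) hβ₀ (by linarith)
        hA.2 hv
  have key := mul_norm_sq_le_of_mul_inner_le (by linarith) hcos
  rw [sub_sub_sub_cancel_left] at key
  have hsq : ‖T - xs‖ ^ 2 ≤ ((1 - β) ^ 2 / (1 - 2 * β)) * ‖xbar - xs‖ ^ 2 := by
    rw [div_mul_eq_mul_div, le_div_iff₀ (by linarith)]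
    linarith
  refine ⟨hsq, fun hβ' => le_of_sq_le_sq ?_ (by positivity)⟩
  calc ‖T - xs‖ ^ 2 ≤ ((1 - β) ^ 2 / (1 - 2 * β)) * ‖xbar - xs‖ ^ 2 := hsq
    _ ≤ (5 / 4) ^ 2 * ‖xbar - xs‖ ^ 2 := by gcongr; exact one_sub_sq_div_one_sub_two_mul_le hβ₀ hβ'
    _ = (5 / 4 * ‖xbar - xs‖) ^ 2 := by ring

theorem stmt_5 (f ψ : E → ℝ) (f' : E → E)
    (hf : ConvexOn ℝ Set.univ f) (hψ : ConvexOn ℝ Set.univ ψ)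
    (hf' : ∀ x, HasGradientAt f (f' x) x)
    (p : ℕ) (hp : 1 ≤ p) (H β : ℝ) (hH : 0 < H)
    (hβ : β ∈ Set.Ico (0 : ℝ) (1 / 2))
    (xbar T g : E) (hA : InA f' ψ p H β xbar T g)
    (xs : E) (hxs : ∀ x, f xs + ψ xs ≤ f x + ψ x) :
    ‖T - xs‖ ^ 2 ≤ ((1 - β) ^ 2 / (1 - 2 * β)) * ‖xbar - xs‖ ^ 2 ∧
      (β ≤ 3 / 8 → ‖T - xs‖ ≤ (5 / 4) * ‖xbar - xs‖) :=
  stmt_5_general f ψ f' hf hf' p H β hH hβ xbar T g hA xs hxs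
end

section
/- Let p ≥ 1 be an integer, H > 0 and R_0 > 0. Let (g_k)_{k≥0} be positive reals and let (A_k)_{k≥0} be defined by A_0 = 0 and A_{k+1} = A_k + a_{k+1}, where each a_{k+1} > 0 satisfies a_{k+1}²/(A_k + a_{k+1}) = (1/H)^{1/p} g_k^{(1−p)/p}. Suppose that ∑_{i=0}^{k−1} A_{i+1} g_i^{(p+1)/p} ≤ H^{1/p} R_0² for every k ≥ 1. Then for every k ≥ 1, A_k ≥ (1/4)^{(p+1)/2} H^{−1} R_0^{−(p−1)} (1 + 2(k−1)/(p+1))^{(3p+1)/2}. -/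
/-!
Put `λₖ = aₖ₊₁² / Aₖ₊₁`. The recursion gives `√Aₖ₊₁ - √Aₖ ≥ √λₖ / 2`, so `4 Aₖ ≥ (∑_{i<k} √λᵢ)²`,
and `√λᵢ` is a multiple of `gᵢ^((1-p)/(2p))`. Hölder's inequality with exponent
`α = (p-1)/(3p+1)` plays this sum against `∑ Aᵢ₊₁ gᵢ^((p+1)/p) ≤ H^(1/p) R₀²` and eliminates `g`:
`Aₖ ≥ c (∑_{i<k} Aᵢ₊₁^α)^γ` with `γ = (3p+1)/(p+1)`. With `q = (p+1)/2`, the sequence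
`c^q (1 + n/q)^(qγ)` satisfies this recursive inequality, because `∑_{i≤n} (1 + i/q)^(q-1)`
dominates `(1 + n/q)^q` (a Bernoulli estimate), and an induction compares `Aₙ₊₁` with it.
-/

open Finset Real

theorem sum_rpow_mul_rpow_one_sub_le {ι : Type*} (s : Finset ι) {f g : ι → ℝ} {α : ℝ}
    (hα₀ : 0 ≤ α) (hα₁ : α ≤ 1) (hf : ∀ i ∈ s, 0 ≤ f i) (hg : ∀ i ∈ s, 0 ≤ g i) :
    ∑ i ∈ s, f i ^ α * g i ^ (1 - α) ≤ (∑ i ∈ s, f i) ^ α * (∑ i ∈ s, g i) ^ (1 - α) := by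
  rcases hα₀.eq_or_lt with rfl | hα₀
  · simp
  rcases hα₁.eq_or_lt with rfl | hα₁
  · simp
  have holder := inner_le_Lp_mul_Lq_of_nonneg s (f := fun i => f i ^ α)
    (g := fun i => g i ^ (1 - α)) (HolderConjugate.inv_one_sub_inv hα₀ hα₁)
    (fun i hi => rpow_nonneg (hf i hi) _) (fun i hi => rpow_nonneg (hg i hi) _)
  have h1α : 1 - α ≠ 0 := by linarith
  simp only [one_div, inv_inv] at holder
  convert holder using 3 <;> refine sum_congr rfl fun i hi => ?_
  · rw [← rpow_mul (hf i hi), mul_inv_cancel₀ hα₀.ne', rpow_one]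
  · rw [← rpow_mul (hg i hi), mul_inv_cancel₀ h1α, rpow_one]

theorem sum_rpow_le_of_rpow_mul_rpow_one_sub_eq_one {ι : Type*} (s : Finset ι)
    {x u v : ι → ℝ} {α : ℝ} (hα₀ : 0 ≤ α) (hα₁ : α ≤ 1) (hx : ∀ i ∈ s, 0 ≤ x i)
    (hu : ∀ i ∈ s, 0 ≤ u i) (hv : ∀ i ∈ s, 0 ≤ v i)
    (huv : ∀ i ∈ s, u i ^ α * v i ^ (1 - α) = 1) :
    ∑ i ∈ s, x i ^ α ≤ (∑ i ∈ s, x i * u i) ^ α * (∑ i ∈ s, v i) ^ (1 - α) := by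
  calc ∑ i ∈ s, x i ^ α = ∑ i ∈ s, (x i * u i) ^ α * v i ^ (1 - α) := by
        refine sum_congr rfl fun i hi => ?_
        rw [mul_rpow (hx i hi) (hu i hi), mul_assoc, huv i hi, mul_one]
    _ ≤ _ := sum_rpow_mul_rpow_one_sub_le s hα₀ hα₁
        (fun i hi => mul_nonneg (hx i hi) (hu i hi)) hv

theorem sqrt_add_half_sqrt_le {A a l : ℝ} (hA : 0 ≤ A) (ha : 0 < a)
    (hl : a ^ 2 / (A + a) = l) : √A + √l / 2 ≤ √(A + a) := by
  have hB : 0 < A + a := by linarith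
  have hsl : √l = a / √(A + a) := by
    rw [← hl, sqrt_div' _ hB.le, sqrt_sq ha.le]
  have hle : √A ≤ √(A + a) := sqrt_le_sqrt (by linarith)
  rw [hsl, div_div, ← le_sub_iff_add_le', div_le_iff₀ (by positivity)]
  -- `a = (√(A + a) - √A) (√(A + a) + √A)` and `√(A + a) + √A ≤ 2 √(A + a)`
  nlinarith [sq_sqrt hA, sq_sqrt hB.le, sqrt_pos.2 hB]

theorem nonneg_of_eq_add_nonneg {A a : ℕ → ℝ} (hA0 : A 0 = 0) (ha : ∀ k, 0 ≤ a (k + 1))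
    (hArec : ∀ k, A (k + 1) = A k + a (k + 1)) (k : ℕ) : 0 ≤ A k := by
  induction k with
  | zero => exact hA0.ge
  | succ k ih => rw [hArec]; linarith [ha k]

theorem sum_sqrt_sq_le_four_mul {A a l : ℕ → ℝ} (hA0 : A 0 = 0) (ha : ∀ k, 0 < a (k + 1))
    (hArec : ∀ k, A (k + 1) = A k + a (k + 1))
    (hl : ∀ k, a (k + 1) ^ 2 / (A k + a (k + 1)) = l k) (k : ℕ) :
    (∑ i ∈ range k, √(l i)) ^ 2 ≤ 4 * A k := by
  have hA := nonneg_of_eq_add_nonneg hA0 (fun k => (ha k).le) hArec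
  have hsum : ∀ k, (∑ i ∈ range k, √(l i)) / 2 ≤ √(A k) := by
    intro k
    induction k with
    | zero => simp [hA0]
    | succ k ih =>
      rw [sum_range_succ, add_div, hArec]
      linarith [sqrt_add_half_sqrt_le (hA k) (ha k) (hl k)]
  have h0 : 0 ≤ ∑ i ∈ range k, √(l i) := sum_nonneg fun i _ => sqrt_nonneg _
  nlinarith [hsum k, sq_sqrt (hA k)]

theorem sum_sqrt_mul_rpow_sq {ι : Type*} (s : Finset ι) {c e : ℝ} {g : ι → ℝ} (hc : 0 ≤ c)
    (hg : ∀ i ∈ s, 0 ≤ g i) :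
    (∑ i ∈ s, √(c * g i ^ e)) ^ 2 = c * (∑ i ∈ s, g i ^ (e / 2)) ^ 2 := by
  have hterm : ∀ i ∈ s, √(c * g i ^ e) = √c * g i ^ (e / 2) := fun i hi => by
    rw [sqrt_mul hc, sqrt_eq_rpow (g i ^ e), ← rpow_mul (hg i hi), mul_one_div]
  rw [sum_congr rfl hterm, ← mul_sum, mul_pow, sq_sqrt hc]

theorem rpow_le_rpow_sub_inv_add_rpow_sub_one {q w : ℝ} (hq : 1 ≤ q) (hw : q⁻¹ ≤ w) :
    w ^ q ≤ (w - q⁻¹) ^ q + w ^ (q - 1) := by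
  have hq₀ : 0 < q := by linarith
  have hw₀ : 0 < w := lt_of_lt_of_le (by positivity) hw
  have hqw : (q * w)⁻¹ ≤ 1 :=
    inv_le_one_of_one_le₀ (by rw [inv_le_iff_one_le_mul₀ hq₀] at hw; linarith)
  have bernoulli := one_add_mul_self_le_rpow_one_add (s := -(q * w)⁻¹) (by linarith) hq
  have hlin : 1 + q * -(q * w)⁻¹ = 1 - w⁻¹ := by field_simp; ring
  have hfac : w - q⁻¹ = w * (1 + -(q * w)⁻¹) := by field_simp; ring
  rw [hlin] at bernoulli
  rw [hfac, mul_rpow hw₀.le (by linarith), rpow_sub_one hw₀.ne', div_eq_mul_inv]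
  have := mul_le_mul_of_nonneg_left bernoulli (rpow_nonneg hw₀.le q)
  rw [mul_sub, mul_one] at this
  linarith

theorem rpow_sub_rpow_sub_one_lt {q s t : ℝ} (hq : 1 ≤ q) (hs : 0 < s) (ht : 1 ≤ t)
    (hst : s < t) : s ^ q - s ^ (q - 1) < t ^ q - t ^ (q - 1) := by
  have factor : ∀ x : ℝ, 0 < x → x ^ q - x ^ (q - 1) = x ^ (q - 1) * (x - 1) := fun x hx => by
    rw [rpow_sub_one hx.ne']; field_simp
  rw [factor s hs, factor t (by linarith)]
  calc s ^ (q - 1) * (s - 1) < s ^ (q - 1) * (t - 1) := by gcongr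
    _ ≤ t ^ (q - 1) * (t - 1) := by gcongr

theorem one_add_div_rpow_le_sum_rpow_sub_one {q : ℝ} (hq : 1 ≤ q) (m : ℕ) :
    (1 + m / q) ^ q ≤ ∑ i ∈ range (m + 1), (1 + i / q) ^ (q - 1) := by
  induction m with
  | zero => simp
  | succ m ih =>
    have hstep := rpow_le_rpow_sub_inv_add_rpow_sub_one hq
      (w := 1 + (m + 1 : ℕ) / q) (by
        have : q⁻¹ ≤ 1 := inv_le_one_of_one_le₀ hq
        have : 0 ≤ ((m + 1 : ℕ) : ℝ) / q := by positivity
        linarith)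
    have hprev : 1 + ((m + 1 : ℕ) : ℝ) / q - q⁻¹ = 1 + m / q := by push_cast; ring
    rw [hprev] at hstep
    rw [sum_range_succ]
    linarith

theorem one_add_div_le_of_sum_rpow_sub_one_le_rpow {q : ℝ} (hq : 1 ≤ q) {z : ℕ → ℝ}
    (hz : ∀ n, 0 < z (n + 1))
    (hrec : ∀ n, ∑ i ∈ range (n + 1), z (i + 1) ^ (q - 1) ≤ z (n + 1) ^ q) (n : ℕ) :
    1 + n / q ≤ z (n + 1) := by
  induction n using Nat.strong_induction_on with
  | _ n ih =>
    have hprev : ∑ i ∈ range n, (1 + i / q) ^ (q - 1) ≤ ∑ i ∈ range n, z (i + 1) ^ (q - 1) :=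
      sum_le_sum fun i hi => rpow_le_rpow (by positivity) (ih i (mem_range.1 hi)) (by linarith)
    have hlower := one_add_div_rpow_le_sum_rpow_sub_one hq n
    have hupper := hrec n
    rw [sum_range_succ] at hlower hupper
    have hu : 1 ≤ 1 + n / q := le_add_of_nonneg_right (by positivity)
    by_contra! hlt
    linarith [rpow_sub_rpow_sub_one_lt hq (hz n) hu hlt]

theorem rpow_mul_one_add_div_rpow_le_of_mul_sum_rpow_rpow_le {q γ α c : ℝ} (hq : 1 ≤ q)
    (hγ : 0 < γ) (hα : q * (α * γ) = q - 1) (hc : 0 < c) {x : ℕ → ℝ}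
    (hx : ∀ n, 0 < x (n + 1))
    (hrec : ∀ n, c * (∑ i ∈ range (n + 1), x (i + 1) ^ α) ^ γ ≤ x (n + 1)) (n : ℕ) :
    c ^ q * (1 + n / q) ^ (q * γ) ≤ x (n + 1) := by
  set C := c ^ q
  have hC : 0 < C := by positivity
  have hQ : 0 < q * γ := by positivity
  -- rescaling by `C` removes the constant, since `c * C ^ (α * γ) = C`
  set z : ℕ → ℝ := fun n => (x n / C) ^ (q * γ)⁻¹
  have hz : ∀ n, 0 < z (n + 1) := fun n => by have := hx n; positivity
  have hxz : ∀ n, x (n + 1) = C * z (n + 1) ^ (q * γ) := fun n => by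
    rw [← rpow_mul (div_pos (hx n) hC).le, inv_mul_cancel₀ hQ.ne', rpow_one,
      mul_div_cancel₀ _ hC.ne']
  have hxα : ∀ n, x (n + 1) ^ α = C ^ α * z (n + 1) ^ (q - 1) := fun n => by
    rw [hxz, mul_rpow hC.le (rpow_nonneg (hz n).le _), ← rpow_mul (hz n).le, ← hα]
    ring_nf
  have hcC : c * C ^ (α * γ) = C := by
    rw [← rpow_mul hc.le, hα, ← rpow_one_add' hc.le (by linarith), add_sub_cancel]
  have hrec' : ∀ n, ∑ i ∈ range (n + 1), z (i + 1) ^ (q - 1) ≤ z (n + 1) ^ q := fun n => by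
    have h := hrec n
    rw [hxz n, sum_congr rfl fun i _ => hxα i, ← mul_sum,
      mul_rpow (by positivity) (sum_nonneg fun i _ => rpow_nonneg (hz i).le _),
      ← rpow_mul hC.le, ← mul_assoc, hcC, rpow_mul (hz n).le] at h
    exact (rpow_le_rpow_iff (sum_nonneg fun i _ => rpow_nonneg (hz i).le _)
      (rpow_nonneg (hz n).le _) hγ).1 (le_of_mul_le_mul_left h hC)
  rw [hxz n]
  gcongr
  exact one_add_div_le_of_sum_rpow_sub_one_le_rpow hq hz hrec' n

theorem mul_sum_rpow_rpow_le_of_sum_mul_rpow_le {p H K : ℝ} (hp : 1 ≤ p) (hH : 0 < H)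
    (hK : 0 < K) {g A : ℕ → ℝ} (hg : ∀ i, 0 < g i) (hA : ∀ i, 0 < A (i + 1)) {k : ℕ}
    (hsum : ∑ i ∈ range k, A (i + 1) * g i ^ ((p + 1) / p) ≤ K)
    (hsqrt : (∑ i ∈ range k, √((1 / H) ^ (1 / p) * g i ^ ((1 - p) / p))) ^ 2 ≤ 4 * A k) :
    1 / 4 * (1 / H) ^ (1 / p) * K ^ (-((p - 1) / (p + 1))) *
      (∑ i ∈ range k, A (i + 1) ^ ((p - 1) / (3 * p + 1))) ^ ((3 * p + 1) / (p + 1)) ≤ A k := by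
  have hp₀ : 0 < p := by linarith
  set α := (p - 1) / (3 * p + 1) with hα
  set γ := (3 * p + 1) / (p + 1) with hγ
  set β := (1 - p) / p / 2 with hβ
  have hexp₁ : (p + 1) / p * α + β * (1 - α) = 0 := by rw [hα, hβ]; field_simp; ring
  have hexp₂ : α * γ = (p - 1) / (p + 1) := by rw [hα, hγ]; field_simp
  have hexp₃ : (1 - α) * γ = 2 := by rw [hα, hγ]; field_simp; ring
  have hα₀ : 0 ≤ α := by positivity
  have hα₁ : α ≤ 1 := by rw [div_le_one (by positivity)]; linarith
  set G := ∑ i ∈ range k, g i ^ β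
  set S := ∑ i ∈ range k, A (i + 1) ^ α
  have hG : 0 ≤ G := sum_nonneg fun i _ => (rpow_pos_of_pos (hg i) _).le
  rw [sum_sqrt_mul_rpow_sq _ (by positivity) fun i _ => (hg i).le] at hsqrt
  have holder : S ≤ K ^ α * G ^ (1 - α) := by
    refine (sum_rpow_le_of_rpow_mul_rpow_one_sub_eq_one _ (u := fun i => g i ^ ((p + 1) / p))
      (v := fun i => g i ^ β) hα₀ hα₁ (fun i _ => (hA i).le)
      (fun i _ => (rpow_pos_of_pos (hg i) _).le) (fun i _ => (rpow_pos_of_pos (hg i) _).le)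
      fun i _ => ?_).trans ?_
    · rw [← rpow_mul (hg i).le, ← rpow_mul (hg i).le, ← rpow_add (hg i), hexp₁, rpow_zero]
    · gcongr
      exact sum_nonneg fun i _ => mul_nonneg (hA i).le (rpow_pos_of_pos (hg i) _).le
  have hSγ : S ^ γ ≤ K ^ ((p - 1) / (p + 1)) * G ^ 2 := by
    have hS : 0 ≤ S := sum_nonneg fun i _ => (rpow_pos_of_pos (hA i) _).le
    calc S ^ γ ≤ (K ^ α * G ^ (1 - α)) ^ γ := by gcongr
      _ = K ^ ((p - 1) / (p + 1)) * G ^ 2 := by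
        rw [mul_rpow (by positivity) (by positivity), ← rpow_mul hK.le, ← rpow_mul hG,
          ← rpow_natCast, hexp₂, hexp₃]
        norm_num
  rw [rpow_neg hK.le]
  calc 1 / 4 * (1 / H) ^ (1 / p) * (K ^ ((p - 1) / (p + 1)))⁻¹ * S ^ γ
      ≤ 1 / 4 * (1 / H) ^ (1 / p) * (K ^ ((p - 1) / (p + 1)))⁻¹ *
          (K ^ ((p - 1) / (p + 1)) * G ^ 2) := by gcongr
    _ = 1 / 4 * ((1 / H) ^ (1 / p) * G ^ 2) := by field_simp
    _ ≤ A k := by linarith [hsqrt]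

theorem bound_const_rpow_eq {p H R : ℝ} (hp : 0 < p) (hH : 0 < H) (hR : 0 < R) :
    (1 / 4 * (1 / H) ^ (1 / p) * (H ^ (1 / p) * R ^ 2) ^ (-((p - 1) / (p + 1)))) ^ ((p + 1) / 2)
      = (1 / 4) ^ ((p + 1) / 2) * H⁻¹ * R ^ (-(p - 1)) := by
  refine log_injOn_pos (Set.mem_Ioi.2 (by positivity)) (Set.mem_Ioi.2 (by positivity)) ?_
  rw [log_rpow, log_mul, log_mul, log_rpow, log_rpow, log_mul, log_rpow, log_mul, log_mul,
    log_rpow, log_inv, log_rpow, log_pow, one_div H, log_inv]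
  · field_simp
    ring
  all_goals positivity

theorem stmt_7 (p : ℕ) (hp : 1 ≤ p) (H R0 : ℝ) (hH : 0 < H) (hR0 : 0 < R0)
    (g : ℕ → ℝ) (hg : ∀ k, 0 < g k)
    (a A : ℕ → ℝ) (hA0 : A 0 = 0) (ha : ∀ k, 0 < a (k + 1))
    (hArec : ∀ k, A (k + 1) = A k + a (k + 1))
    (haeq : ∀ k, a (k + 1) ^ 2 / (A k + a (k + 1)) =
      (1 / H) ^ ((1 : ℝ) / p) * g k ^ ((1 - (p : ℝ)) / p))
    (hsum : ∀ k : ℕ, 1 ≤ k →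
      ∑ i ∈ Finset.range k, A (i + 1) * g i ^ (((p : ℝ) + 1) / p) ≤
        H ^ ((1 : ℝ) / p) * R0 ^ 2) :
    ∀ k : ℕ, 1 ≤ k →
      A k ≥ ((1 : ℝ) / 4) ^ (((p : ℝ) + 1) / 2) * H⁻¹ * R0 ^ (-((p : ℝ) - 1)) *
        (1 + 2 * ((k : ℝ) - 1) / ((p : ℝ) + 1)) ^ ((3 * (p : ℝ) + 1) / 2) := by
  have hp' : (1 : ℝ) ≤ p := by exact_mod_cast hp
  have hA : ∀ n, 0 < A (n + 1) := fun n => by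
    rw [hArec]
    linarith [nonneg_of_eq_add_nonneg hA0 (fun k => (ha k).le) hArec n, ha n]
  have hrec := fun n => mul_sum_rpow_rpow_le_of_sum_mul_rpow_le hp' hH (by positivity) hg hA
    (hsum (n + 1) n.succ_pos) (sum_sqrt_sq_le_four_mul hA0 ha hArec haeq (n + 1))
  have hlower := rpow_mul_one_add_div_rpow_le_of_mul_sum_rpow_rpow_le (q := ((p : ℝ) + 1) / 2)
    (by linarith) (by positivity) (by field_simp; ring) (by positivity) hA hrec
  intro k hk
  obtain ⟨n, rfl⟩ := Nat.exists_eq_add_of_le' hk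
  have hbase : 1 + 2 * (((n + 1 : ℕ) : ℝ) - 1) / ((p : ℝ) + 1) = 1 + n / (((p : ℝ) + 1) / 2) := by
    push_cast; field_simp; ring
  have hexp : (3 * (p : ℝ) + 1) / 2 = ((p : ℝ) + 1) / 2 * ((3 * p + 1) / (p + 1)) := by
    field_simp
  rw [ge_iff_le, ← bound_const_rpow_eq (by positivity) hH hR0, hbase, hexp]
  exact hlower n
end

section
/- Let p ≥ 1 be an integer, H > 0 and β ∈ [0, 1/p]. Let x_k, υ_k ∈ E, u_k = υ_k − x_k, and let 0 ≤ τ¹ ≤ τ² ≤ 1, y¹ = x_k + τ¹u_k, y² = x_k + τ²u_k. Let ĝ be a subgradient of ψ at T¹ with (T¹, ĝ) ∈ A(y¹, β) and let g̃ be a subgradient of ψ at T² with (T², g̃) ∈ A(y², β). Set β¹ = ⟨∇f(T¹) + ĝ, u_k⟩ and β² = ⟨∇f(T²) + g̃, u_k⟩, and assume β¹ ≤ 0 ≤ β² with β² − β¹ > 0. Set α = β²/(β² − β¹) and g_k = (α‖∇f(T¹) + ĝ‖^{(p+1)/p} + (1−α)‖∇f(T²) + g̃‖^{(p+1)/p})^{p/(p+1)},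 and assume α(τ¹ − τ²)β¹ ≤ (1/2)((1−β)/H)^{1/p} g_k^{(p+1)/p}. Set x_{k+1} = αT¹ + (1−α)T² and 𝓛_k(x) = α(f(T¹) + ⟨∇f(T¹), x − T¹⟩) + (1−α)(f(T²) + ⟨∇f(T²), x − T²⟩) + ψ(x). Then F(x_k) ≥ 𝓛_k(x_k) ≥ F(x_{k+1}) + (1/2)((1−β)/H)^{1/p} g_k^{(p+1)/p}. -/
open scoped RealInnerProductSpace

variable {E : Type*} [NormedAddCommGroup E] [InnerProductSpace ℝ E] [FiniteDimensional ℝ E]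

/-!
For an acceptable prox pair `(T, g)` at `y`, put `h = ∇f(T) + g`, `r = ‖T - y‖`, `s = H r^(p-1)`.
Squaring the acceptance condition gives `2 s ⟪h, y - T⟫ ≥ (1 - β²)‖h‖² + (H r^p)²`, and the
triangle inequality gives `H r^p ≥ (1 - β)‖h‖ = H ρ^p` with `ρ = ((1 - β)‖h‖ / H)^(1/p)`, so
`ρ ≤ r`.
AM-GM on `r^(p-1) ρ` then yields `⟪h, y - T⟫ ≥ ρ ‖h‖`; this step is where `β ≤ 1/p` enters.

The weight `α` is chosen so that `α β¹ + (1 - α) β² = 0`. Averaging the subgradient inequalities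
at `x_k` for the two pairs, the shifts `τⁱ u_k` therefore cost only `α (τ¹ - τ²) β¹`, which is at
most half of the gain `((1 - β)/H)^(1/p) g_k^((p+1)/p)`; convexity of `F` at `x_{k+1}` finishes.
-/

theorem one_sub_mul_norm_le_of_norm_add_le {G : Type*} [SeminormedAddCommGroup G] {a b : G} {β : ℝ}
    (h : ‖a + b‖ ≤ β * ‖a‖) :
    (1 - β) * ‖a‖ ≤ ‖b‖ := by
  have := norm_sub_le (a + b) b
  rw [add_sub_cancel_right] at this
  linarith

theorem natCast_mul_pow_pred_mul_le {p : ℕ} {ρ r : ℝ} (hρ : 0 ≤ ρ) (hρr : ρ ≤ r) :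
    p * r ^ (p - 1) * ρ ≤ (p - 1) * r ^ p + ρ ^ p := by
  rcases Nat.eq_zero_or_pos p with rfl | hp
  · simp
  have h := (le_abs_self _).trans (abs_pow_sub_pow_le r ρ p)
  rw [abs_of_nonneg (sub_nonneg.2 hρr), abs_of_nonneg (hρ.trans hρr), abs_of_nonneg hρ,
    max_eq_left hρr] at h
  have hpow : r ^ p = r ^ (p - 1) * r := by rw [← pow_succ, Nat.sub_add_cancel hp]
  nlinarith

theorem two_mul_pow_pred_mul_pow_succ_le {p : ℕ} {ρ r β : ℝ} (hp : 1 ≤ p)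
    (hpβ : (p : ℝ) * β ≤ 1) (hρ : 0 ≤ ρ) (hρr : ρ ≤ r) :
    2 * r ^ (p - 1) * ρ ^ (p + 1) ≤ (1 + β) * (ρ ^ p) ^ 2 + (1 - β) * (r ^ p) ^ 2 := by
  have hp1 : (1 : ℝ) ≤ p := by exact_mod_cast hp
  have hβ1 : β ≤ 1 := by nlinarith
  have hAB : ρ ^ p ≤ r ^ p := pow_le_pow_left₀ hρ hρr p
  have hA : 0 ≤ ρ ^ p := pow_nonneg hρ p
  have hamgm := mul_le_mul_of_nonneg_left (natCast_mul_pow_pred_mul_le (p := p) hρ hρr)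
    (mul_nonneg zero_le_two hA)
  -- after AM-GM, p times the remaining gap is p(1-β)(B-A)² + 2(1-pβ)A(B-A), A = ρ^p, B = r^p
  have hgap :
      0 ≤ p * (1 - β) * (r ^ p - ρ ^ p) ^ 2 + 2 * (1 - p * β) * ρ ^ p * (r ^ p - ρ ^ p) := by
    have := mul_nonneg (mul_nonneg (by linarith : (0:ℝ) ≤ p) (sub_nonneg.2 hβ1))
      (sq_nonneg (r ^ p - ρ ^ p))
    have := mul_nonneg (mul_nonneg (mul_nonneg zero_le_two (sub_nonneg.2 hpβ)) hA)
      (sub_nonneg.2 hAB)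
    linarith
  rw [pow_succ]
  nlinarith

section InnerProductSpace

variable {F : Type*} [NormedAddCommGroup F] [InnerProductSpace ℝ F]

theorem ConvexOn.add_inner_le_of_hasGradientAt [CompleteSpace F] {f : F → ℝ} {f' x : F}
    (hf : ConvexOn ℝ Set.univ f) (hx : HasGradientAt f f' x) (y : F) :
    f x + ⟪f', y - x⟫ ≤ f y := by
  set φ : ℝ →ᵃ[ℝ] F := AffineMap.lineMap x y
  have hline : ConvexOn ℝ Set.univ (f ∘ φ) := hf.comp_affineMap φ
  have hderiv : HasDerivAt (f ∘ φ) ⟪f', y - x⟫ 0 := by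
    have hfx := hasGradientAt_iff_hasFDerivAt.1 hx
    rw [← AffineMap.lineMap_apply_zero x y (k := ℝ)] at hfx
    simpa using hfx.comp_hasDerivAt 0 AffineMap.hasDerivAt_lineMap
  have := hline.le_slope_of_hasDerivAt (Set.mem_univ 0) (Set.mem_univ 1) one_pos hderiv
  simp [φ, slope_def_field] at this
  linarith

theorem sq_add_sq_le_two_mul_inner_of_norm_add_smul_le {h x y : F} {s β : ℝ}
    (hle : ‖h + s • (x - y)‖ ≤ β * ‖h‖) :
    (1 - β ^ 2) * ‖h‖ ^ 2 + (s * ‖x - y‖) ^ 2 ≤ 2 * s * ⟪h, y - x⟫ := by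
  have hsq := pow_le_pow_left₀ (norm_nonneg _) hle 2
  have hinner : ⟪h, x - y⟫ = -⟪h, y - x⟫ := by rw [← inner_neg_right, neg_sub]
  rw [norm_add_sq_real, norm_smul, real_inner_smul_right, Real.norm_eq_abs, mul_pow, sq_abs,
    hinner] at hsq
  nlinarith

theorem mul_norm_le_inner_of_norm_add_smul_le {p : ℕ} {H β ρ : ℝ} {h x y : F} (hp : 1 ≤ p)
    (hH : 0 < H) (hpβ : (p : ℝ) * β ≤ 1) (hρ : 0 ≤ ρ) (hρp : H * ρ ^ p = (1 - β) * ‖h‖)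
    (hle : ‖h + (H * ‖x - y‖ ^ (p - 1)) • (x - y)‖ ≤ β * ‖h‖) :
    ρ * ‖h‖ ≤ ⟪h, y - x⟫ := by
  have hp0 : p ≠ 0 := by omega
  have hβ1 : β ≤ 1 := by nlinarith [(Nat.one_le_cast (α := ℝ)).2 hp]
  set n := ‖h‖
  set r := ‖x - y‖
  set s := H * r ^ (p - 1) with hs_def
  have hsr : s * r = H * r ^ p := by rw [mul_assoc, ← pow_succ, Nat.sub_add_cancel hp]
  have hquad := sq_add_sq_le_two_mul_inner_of_norm_add_smul_le hle
  have hlin : (1 - β) * n ≤ s * r := by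
    simpa [norm_smul, abs_of_nonneg (by positivity : 0 ≤ s)] using
      one_sub_mul_norm_le_of_norm_add_le hle
  have hρr : ρ ≤ r := by
    refine (pow_le_pow_iff_left₀ hρ (norm_nonneg _) hp0).1 ?_
    nlinarith
  rcases (norm_nonneg (x - y)).eq_or_lt with hr | hr
  · have hxy : y - x = 0 := by rw [← neg_sub, norm_eq_zero.1 hr.symm, neg_zero]
    have hρ0 : ρ = 0 := le_antisymm (hr ▸ hρr) hρ
    simp [hxy, hρ0]
  have hs : 0 < s := by positivity
  have hpoly := two_mul_pow_pred_mul_pow_succ_le hp hpβ hρ hρr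
  rcases hβ1.lt_or_eq with hβ1 | rfl
  · -- the factor 1 - β lets us substitute (1 - β) ‖h‖ = H ρ ^ p
    have hscaled :
        (1 - β) * (2 * s * (ρ * n)) ≤ (1 - β) * ((1 - β ^ 2) * n ^ 2 + (s * r) ^ 2) :=
      calc (1 - β) * (2 * s * (ρ * n)) = H ^ 2 * (2 * r ^ (p - 1) * ρ ^ (p + 1)) := by
            linear_combination (-2 * s * ρ) * hρp + (2 * H * ρ ^ (p + 1)) * hs_def
        _ ≤ H ^ 2 * ((1 + β) * (ρ ^ p) ^ 2 + (1 - β) * (r ^ p) ^ 2) :=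
            mul_le_mul_of_nonneg_left hpoly (sq_nonneg H)
        _ = (1 - β) * ((1 - β ^ 2) * n ^ 2 + (s * r) ^ 2) := by
            linear_combination (1 + β) * (H * ρ ^ p + (1 - β) * n) * hρp
              - (1 - β) * (s * r + H * r ^ p) * hsr
    have h2s : 2 * s * (ρ * n) ≤ 2 * s * ⟪h, y - x⟫ :=
      (le_of_mul_le_mul_left hscaled (by linarith)).trans hquad
    exact le_of_mul_le_mul_left h2s (by positivity)
  · have hρ0 : ρ = 0 := by simpa [hH.ne', hp0] using hρp
    rw [hρ0, zero_mul]
    nlinarith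

theorem rpow_mul_norm_rpow_le_inner_of_norm_add_smul_le {p : ℕ} {H β : ℝ} {h x y : F}
    (hp : 1 ≤ p) (hH : 0 < H) (hpβ : (p : ℝ) * β ≤ 1)
    (hle : ‖h + (H * ‖x - y‖ ^ (p - 1)) • (x - y)‖ ≤ β * ‖h‖) :
    ((1 - β) / H) ^ ((1 : ℝ) / p) * ‖h‖ ^ (((p : ℝ) + 1) / p) ≤ ⟪h, y - x⟫ := by
  have hp0 : p ≠ 0 := by omega
  have hβ1 : β ≤ 1 := by nlinarith [(Nat.one_le_cast (α := ℝ)).2 hp]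
  have hρp : H * (((1 - β) / H * ‖h‖) ^ ((p : ℝ)⁻¹)) ^ p = (1 - β) * ‖h‖ := by
    rw [Real.rpow_inv_natCast_pow (by positivity) hp0]; field_simp
  have hlhs : ((1 - β) / H) ^ ((1 : ℝ) / p) * ‖h‖ ^ (((p : ℝ) + 1) / p) =
      ((1 - β) / H * ‖h‖) ^ ((p : ℝ)⁻¹) * ‖h‖ := by
    rw [show ((p : ℝ) + 1) / p = (p : ℝ)⁻¹ + 1 by field_simp; ring,
      Real.rpow_add' (norm_nonneg _) (by positivity), Real.rpow_one, one_div, ← mul_assoc,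
      ← Real.mul_rpow (by positivity) (norm_nonneg _)]
  rw [hlhs]
  exact mul_norm_le_inner_of_norm_add_smul_le hp hH hpβ (by positivity) hρp hle

theorem InA.rpow_mul_norm_rpow_le_inner_add {f' : F → F} {ψ : F → ℝ} {p : ℕ} {H β τ : ℝ}
    {x u T g : F} (hA : InA f' ψ p H β (x + τ • u) T g) (hp : 1 ≤ p) (hH : 0 < H)
    (hpβ : (p : ℝ) * β ≤ 1) :
    ((1 - β) / H) ^ ((1 : ℝ) / p) * ‖f' T + g‖ ^ (((p : ℝ) + 1) / p) ≤
      ⟪f' T, x - T⟫ + ψ x - ψ T + τ * ⟪f' T + g, u⟫ := by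
  have hprox := rpow_mul_norm_rpow_le_inner_of_norm_add_smul_le hp hH hpβ hA.2
  have hsub := hA.1 x
  rw [show x + τ • u - T = (x - T) + τ • u by abel, inner_add_right, real_inner_smul_right,
    inner_add_left] at hprox
  linarith

end InnerProductSpace

theorem stmt_11_general (f ψ : E → ℝ) (f' : E → E)
    (hf : ConvexOn ℝ Set.univ f) (hψ : ConvexOn ℝ Set.univ ψ)
    (hf' : ∀ x, HasGradientAt f (f' x) x)
    (p : ℕ) (hp : 1 ≤ p) (H β : ℝ) (hH : 0 < H)
    (hβ : β ∈ Set.Icc (0 : ℝ) (1 / (p : ℝ)))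
    (xk vk T1 T2 ghat gtil : E) (τ1 τ2 : ℝ)
    (hA1 : InA f' ψ p H β (xk + τ1 • (vk - xk)) T1 ghat)
    (hA2 : InA f' ψ p H β (xk + τ2 • (vk - xk)) T2 gtil)
    (hb1 : ⟪f' T1 + ghat, vk - xk⟫ ≤ 0)
    (hb2 : 0 ≤ ⟪f' T2 + gtil, vk - xk⟫)
    (hb12 : 0 < ⟪f' T2 + gtil, vk - xk⟫ - ⟪f' T1 + ghat, vk - xk⟫)
    (α gk : ℝ)
    (hα : α = ⟪f' T2 + gtil, vk - xk⟫ /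
        (⟪f' T2 + gtil, vk - xk⟫ - ⟪f' T1 + ghat, vk - xk⟫))
    (hgk : gk = (α * ‖f' T1 + ghat‖ ^ (((p : ℝ) + 1) / p) +
        (1 - α) * ‖f' T2 + gtil‖ ^ (((p : ℝ) + 1) / p)) ^ ((p : ℝ) / ((p : ℝ) + 1)))
    (hcond : α * (τ1 - τ2) * ⟪f' T1 + ghat, vk - xk⟫ ≤
        (1 / 2) * ((1 - β) / H) ^ ((1 : ℝ) / p) * gk ^ (((p : ℝ) + 1) / p))
    (xk1 : E) (hxk1 : xk1 = α • T1 + (1 - α) • T2) :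
    f xk + ψ xk ≥
        α * (f T1 + ⟪f' T1, xk - T1⟫) + (1 - α) * (f T2 + ⟪f' T2, xk - T2⟫) + ψ xk ∧
      α * (f T1 + ⟪f' T1, xk - T1⟫) + (1 - α) * (f T2 + ⟪f' T2, xk - T2⟫) + ψ xk ≥
        f xk1 + ψ xk1 +
          (1 / 2) * ((1 - β) / H) ^ ((1 : ℝ) / p) * gk ^ (((p : ℝ) + 1) / p) := by
  have hpβ : (p : ℝ) * β ≤ 1 := by
    rw [← le_div_iff₀' (by exact_mod_cast hp)]; exact hβ.2
  have hα0 : 0 ≤ α := hα ▸ div_nonneg hb2 hb12.le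
  have hα1 : 0 ≤ 1 - α := by rw [hα, sub_nonneg, div_le_one hb12]; linarith
  have hαb : α * ⟪f' T1 + ghat, vk - xk⟫ + (1 - α) * ⟪f' T2 + gtil, vk - xk⟫ = 0 := by
    rw [hα]; field_simp; ring
  have hτb : α * (τ1 * ⟪f' T1 + ghat, vk - xk⟫) + (1 - α) * (τ2 * ⟪f' T2 + gtil, vk - xk⟫) =
      α * (τ1 - τ2) * ⟪f' T1 + ghat, vk - xk⟫ := by
    linear_combination τ2 * hαb
  have hgk_pow : gk ^ (((p : ℝ) + 1) / p) = α * ‖f' T1 + ghat‖ ^ (((p : ℝ) + 1) / p) +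
      (1 - α) * ‖f' T2 + gtil‖ ^ (((p : ℝ) + 1) / p) := by
    rw [hgk, ← inv_div, Real.rpow_rpow_inv (by positivity) (by positivity)]
  have hlin1 := hf.add_inner_le_of_hasGradientAt (hf' T1) xk
  have hlin2 := hf.add_inner_le_of_hasGradientAt (hf' T2) xk
  have hprox1 := hA1.rpow_mul_norm_rpow_le_inner_add hp hH hpβ
  have hprox2 := hA2.rpow_mul_norm_rpow_le_inner_add hp hH hpβ
  have hconv : f xk1 + ψ xk1 ≤ α * (f T1 + ψ T1) + (1 - α) * (f T2 + ψ T2) := by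
    simpa [hxk1] using (hf.add hψ).2 (Set.mem_univ T1) (Set.mem_univ T2) hα0 hα1 (by ring)
  rw [hgk_pow] at hcond ⊢
  constructor
  · linarith [mul_le_mul_of_nonneg_left hlin1 hα0, mul_le_mul_of_nonneg_left hlin2 hα1]
  · linarith [mul_le_mul_of_nonneg_left hprox1 hα0, mul_le_mul_of_nonneg_left hprox2 hα1]

theorem stmt_11 (f ψ : E → ℝ) (f' : E → E)
    (hf : ConvexOn ℝ Set.univ f) (hψ : ConvexOn ℝ Set.univ ψ)
    (hf' : ∀ x, HasGradientAt f (f' x) x)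
    (p : ℕ) (hp : 1 ≤ p) (H β : ℝ) (hH : 0 < H)
    (hβ : β ∈ Set.Icc (0 : ℝ) (1 / (p : ℝ)))
    (xk vk T1 T2 ghat gtil : E) (τ1 τ2 : ℝ)
    (hτ1 : 0 ≤ τ1) (hτ12 : τ1 ≤ τ2) (hτ2 : τ2 ≤ 1)
    (hA1 : InA f' ψ p H β (xk + τ1 • (vk - xk)) T1 ghat)
    (hA2 : InA f' ψ p H β (xk + τ2 • (vk - xk)) T2 gtil)
    (hb1 : ⟪f' T1 + ghat, vk - xk⟫ ≤ 0)
    (hb2 : 0 ≤ ⟪f' T2 + gtil, vk - xk⟫)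
    (hb12 : 0 < ⟪f' T2 + gtil, vk - xk⟫ - ⟪f' T1 + ghat, vk - xk⟫)
    (α gk : ℝ)
    (hα : α = ⟪f' T2 + gtil, vk - xk⟫ /
        (⟪f' T2 + gtil, vk - xk⟫ - ⟪f' T1 + ghat, vk - xk⟫))
    (hgk : gk = (α * ‖f' T1 + ghat‖ ^ (((p : ℝ) + 1) / p) +
        (1 - α) * ‖f' T2 + gtil‖ ^ (((p : ℝ) + 1) / p)) ^ ((p : ℝ) / ((p : ℝ) + 1)))
    (hcond : α * (τ1 - τ2) * ⟪f' T1 + ghat, vk - xk⟫ ≤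
        (1 / 2) * ((1 - β) / H) ^ ((1 : ℝ) / p) * gk ^ (((p : ℝ) + 1) / p))
    (xk1 : E) (hxk1 : xk1 = α • T1 + (1 - α) • T2) :
    f xk + ψ xk ≥
        α * (f T1 + ⟪f' T1, xk - T1⟫) + (1 - α) * (f T2 + ⟪f' T2, xk - T2⟫) + ψ xk ∧
      α * (f T1 + ⟪f' T1, xk - T1⟫) + (1 - α) * (f T2 + ⟪f' T2, xk - T2⟫) + ψ xk ≥
        f xk1 + ψ xk1 +
          (1 / 2) * ((1 - β) / H) ^ ((1 : ℝ) / p) * gk ^ (((p : ℝ) + 1) / p) :=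
  stmt_11_general f ψ f' hf hψ hf' p hp H β hH hβ xk vk T1 T2 ghat gtil τ1 τ2 hA1 hA2 hb1 hb2 hb12 α
    gk hα hgk hcond xk1 hxk1
end

section
/- Let E be a finite-dimensional real inner product space, F : E → ℝ a function, and x* ∈ E with F(x*) ≤ F(x) for all x ∈ E. Let x_0, x_k, υ_k ∈ E, A > 0 and B ≥ 0 satisfy A·F(x_k) + B + (1/2)‖x − υ_k‖² ≤ A·F(x) + (1/2)‖x − x_0‖² for every x ∈ E. Let D_0, D_* ≥ 0 be such that every x ∈ E with F(x) ≤ F(x_0) satisfies ‖x − x_0‖ ≤ D_0 and ‖x − x*‖ ≤ D_*. Then F(x_k) ≤ F(x_0), ‖υ_k − x_k‖ ≤ D_0, ‖x_k − x*‖ ≤ D_*, and ‖υ_k − x*‖ ≤ ‖x_0 − x*‖ ≤ D_*. -/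
theorem stmt_14 {E : Type*} [NormedAddCommGroup E] [InnerProductSpace ℝ E]
    [FiniteDimensional ℝ E]
    (F : E → ℝ) (xs : E) (hxs : ∀ x, F xs ≤ F x)
    (x0 xk vk : E) (A B : ℝ) (hA : 0 < A) (hB : 0 ≤ B)
    (h : ∀ x, A * F xk + B + (1 / 2) * ‖x - vk‖ ^ 2 ≤ A * F x + (1 / 2) * ‖x - x0‖ ^ 2)
    (D0 Ds : ℝ) (hD0nn : 0 ≤ D0) (hDsnn : 0 ≤ Ds)
    (hD0 : ∀ x, F x ≤ F x0 → ‖x - x0‖ ≤ D0)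
    (hDs : ∀ x, F x ≤ F x0 → ‖x - xs‖ ≤ Ds) :
    F xk ≤ F x0 ∧ ‖vk - xk‖ ≤ D0 ∧ ‖xk - xs‖ ≤ Ds ∧
      ‖vk - xs‖ ≤ ‖x0 - xs‖ ∧ ‖x0 - xs‖ ≤ Ds := by
  have h0 := h x0
  simp only [sub_self, norm_zero] at h0
  have hle : F xk ≤ F x0 := by
    have hn : (0:ℝ) ≤ ‖x0 - vk‖ ^ 2 := by positivity
    nlinarith
  have hk0 : ‖xk - x0‖ ≤ D0 := hD0 xk hle
  have hks : ‖xk - xs‖ ≤ Ds := hDs xk hle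
  have hvk : ‖vk - xk‖ ≤ D0 := by
    have hk := h xk
    have h1 : ‖xk - vk‖ ^ 2 ≤ ‖xk - x0‖ ^ 2 := by nlinarith
    have h2 : ‖xk - vk‖ ≤ ‖xk - x0‖ := by
      nlinarith [norm_nonneg (xk - vk), norm_nonneg (xk - x0)]
    rw [norm_sub_rev]
    exact h2.trans hk0
  have hvs : ‖vk - xs‖ ≤ ‖x0 - xs‖ := by
    have hs := h xs
    have hFs : A * F xs ≤ A * F xk := by
      exact mul_le_mul_of_nonneg_left (hxs xk) hA.le
    have h1 : ‖xs - vk‖ ^ 2 ≤ ‖xs - x0‖ ^ 2 := by nlinarith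
    have h2 : ‖xs - vk‖ ≤ ‖xs - x0‖ := by
      nlinarith [norm_nonneg (xs - vk), norm_nonneg (xs - x0)]
    rw [norm_sub_rev vk, norm_sub_rev x0]
    exact h2
  exact ⟨hle, hvk, hks, hvs, hDs x0 le_rfl⟩
end

section
/- Let p ≥ 1 be an integer, H > 0, β ∈ [0,1), R_0 ≥ 0 and F* ∈ ℝ. Let (F_k)_{k≥0}, (g_i)_{i≥0} and (G_i)_{i≥0} be real sequences with g_i ≥ 0 and 0 ≤ G_i ≤ 2g_i for all i, such that: (a) F_k − F* ≤ (4^p H R_0^{p+1}/(1−β)) (1 + 2(k−1)/(p+1))^{−(3p+1)/2} for every k ≥ 1, and (b) ∑_{i=k+1}^t g_i^{(p+1)/p} ≤ 2 (H/(1−β))^{1/p} (F_k − F*) for all integers t > k ≥ 0. Then for every integer k ≥ 2 and t = 3k − 2, min_{0 ≤ i ≤ t} G_i ≤ 2 · 4^p (p+1)^{p(3p+1)/(2(p+1))} (H R_0^p/(1−β)) (1/(t−k))^{3p/2}. -/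
set_option maxHeartbeats 1000000 in
theorem stmt_15 (p : ℕ) (hp : 1 ≤ p) (H β R0 Fstar : ℝ) (hH : 0 < H)
    (hβ : β ∈ Set.Ico (0 : ℝ) 1) (hR0 : 0 ≤ R0)
    (F g G : ℕ → ℝ) (hg : ∀ i, 0 ≤ g i) (hG : ∀ i, 0 ≤ G i)
    (hGg : ∀ i, G i ≤ 2 * g i)
    (ha : ∀ k : ℕ, 1 ≤ k → F k - Fstar ≤
        (4 ^ p * H * R0 ^ (p + 1) / (1 - β)) *
          (1 + 2 * ((k : ℝ) - 1) / ((p : ℝ) + 1)) ^ (-(3 * (p : ℝ) + 1) / 2))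
    (hb : ∀ k t : ℕ, k < t →
        ∑ i ∈ Finset.Icc (k + 1) t, g i ^ (((p : ℝ) + 1) / p) ≤
          2 * (H / (1 - β)) ^ ((1 : ℝ) / p) * (F k - Fstar)) :
    ∀ k : ℕ, 2 ≤ k → ∃ i ≤ 3 * k - 2, G i ≤
      2 * 4 ^ p * ((p : ℝ) + 1) ^ ((p : ℝ) * (3 * (p : ℝ) + 1) / (2 * ((p : ℝ) + 1))) *
        (H * R0 ^ p / (1 - β)) *
          (1 / ((3 * (k : ℝ) - 2) - (k : ℝ))) ^ (3 * (p : ℝ) / 2) := by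
  intro k hk
  have hβ1 : β < 1 := hβ.2
  have h1β : (0:ℝ) < 1 - β := by linarith
  have hp' : (1:ℝ) ≤ (p:ℝ) := by exact_mod_cast hp
  have hp0 : (0:ℝ) < (p:ℝ) := by linarith
  have hp1 : (0:ℝ) < (p:ℝ) + 1 := by linarith
  set t := 3 * k - 2 with ht
  have hkt : k < t := by omega
  set q : ℝ := ((p:ℝ) + 1) / p with hq
  set C : ℝ := H / (1 - β) with hCdef
  set D : ℝ := F k - Fstar with hDdef
  have hC : 0 < C := div_pos hH h1β
  have hCp : 0 < C ^ ((1:ℝ)/p) := Real.rpow_pos_of_pos hC _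
  have hsum := hb k t hkt
  have hD : 0 ≤ D := by
    have h0 : (0:ℝ) ≤ ∑ i ∈ Finset.Icc (k+1) t, g i ^ q :=
      Finset.sum_nonneg fun i _ => Real.rpow_nonneg (hg i) _
    nlinarith
  have htc : (t:ℝ) = 3 * (k:ℝ) - 2 := by
    rw [ht, Nat.cast_sub (by omega : 2 ≤ 3 * k)]; push_cast; ring
  set N : ℝ := (t:ℝ) - k with hNdef
  have hN2 : (2:ℝ) ≤ N := by
    rw [hNdef, htc]
    have : (2:ℝ) ≤ (k:ℝ) := by exact_mod_cast hk
    linarith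
  have hNpos : (0:ℝ) < N := by linarith
  -- get an averaged index
  obtain ⟨i, hi_mem, hi⟩ : ∃ i ∈ Finset.Icc (k+1) t,
      g i ^ q ≤ 2 * C ^ ((1:ℝ)/p) * D / N := by
    apply Finset.exists_le_of_sum_le ⟨k+1, by simp [Finset.mem_Icc]; omega⟩
    rw [Finset.sum_const, Nat.card_Icc, nsmul_eq_mul]
    have hcast : ((t + 1 - (k + 1) : ℕ) : ℝ) = N := by
      rw [hNdef]
      have h1 : t + 1 - (k + 1) = t - k := by omega
      rw [h1, Nat.cast_sub (le_of_lt hkt)]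
    rw [hcast, mul_div_cancel₀ _ (ne_of_gt hNpos)]
    exact hsum
  have hit : i ≤ t := (Finset.mem_Icc.mp hi_mem).2
  refine ⟨i, hit, ?_⟩
  -- bound on D via (a)
  set e : ℝ := (3 * (p:ℝ) + 1) / 2 with he
  set A : ℝ := 4 ^ p * H * R0 ^ (p + 1) / (1 - β) with hA
  have hA0 : 0 ≤ A := by positivity
  have hxpos : (0:ℝ) < N / ((p:ℝ) + 1) := div_pos hNpos hp1
  have hDali : D ≤ A * (N / ((p:ℝ) + 1)) ^ (-e) := by
    have h1 := ha k (by omega)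
    have hxle : N / ((p:ℝ) + 1) ≤ 1 + 2 * ((k:ℝ) - 1) / ((p:ℝ) + 1) := by
      rw [hNdef, htc]
      have : (3 * (k:ℝ) - 2 - k) / ((p:ℝ) + 1) = 2 * ((k:ℝ) - 1) / ((p:ℝ) + 1) := by
        ring
      rw [this]
      linarith
    have h2 : (1 + 2 * ((k:ℝ) - 1) / ((p:ℝ) + 1)) ^ (-(3 * (p:ℝ) + 1) / 2)
        ≤ (N / ((p:ℝ) + 1)) ^ (-e) := by
      rw [he, ← neg_div]
      exact Real.rpow_le_rpow_of_nonpos hxpos hxle (by linarith)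
    calc D ≤ A * (1 + 2 * ((k:ℝ) - 1) / ((p:ℝ) + 1)) ^ (-(3 * (p:ℝ) + 1) / 2) := h1
      _ ≤ A * (N / ((p:ℝ) + 1)) ^ (-e) := by
          exact mul_le_mul_of_nonneg_left h2 hA0
  set M : ℝ := 2 * C ^ ((1:ℝ)/p) * (A * (N / ((p:ℝ) + 1)) ^ (-e)) / N with hM
  have hM0 : 0 ≤ M := by positivity
  have hgiq : g i ^ q ≤ M := by
    refine hi.trans ?_
    rw [hM]
    gcongr 2 * C ^ ((1:ℝ)/p) * ?_ / N
  -- pass to g i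
  have hgi : g i ≤ M ^ ((p:ℝ) / ((p:ℝ) + 1)) := by
    have h2 : (g i ^ q) ^ ((p:ℝ) / ((p:ℝ) + 1)) ≤ M ^ ((p:ℝ) / ((p:ℝ) + 1)) :=
      Real.rpow_le_rpow (Real.rpow_nonneg (hg i) _) hgiq (by positivity)
    rwa [← Real.rpow_mul (hg i), hq,
      show ((p:ℝ) + 1) / p * ((p:ℝ) / ((p:ℝ) + 1)) = 1 by
        field_simp, Real.rpow_one] at h2
  -- final bound
  set E : ℝ := (p:ℝ) * (3 * (p:ℝ) + 1) / (2 * ((p:ℝ) + 1)) with hE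
  set r : ℝ := (p:ℝ) / ((p:ℝ) + 1) with hr
  have hNN : (3 * (k:ℝ) - 2) - (k:ℝ) = N := by rw [hNdef, htc]
  rw [hNN]
  have key : M ^ r ≤ 4 ^ p * ((p:ℝ) + 1) ^ E * (H * R0 ^ p / (1 - β)) *
      (1 / N) ^ (3 * (p:ℝ) / 2) := by
    rcases eq_or_lt_of_le hR0 with h0 | hR0pos
    · have hA' : A = 0 := by
        rw [hA, ← h0]
        simp
      have hM' : M = 0 := by rw [hM, hA']; ring
      rw [hM', Real.zero_rpow (by rw [hr]; positivity)]
      positivity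
    · -- logarithm comparison
      have hwpos : (0:ℝ) < (N / ((p:ℝ) + 1)) ^ (-e) := Real.rpow_pos_of_pos hxpos _
      have hApos : 0 < A := by rw [hA]; positivity
      have hMpos : 0 < M := by rw [hM]; positivity
      have hRHSpos : 0 < 4 ^ p * ((p:ℝ) + 1) ^ E * (H * R0 ^ p / (1 - β)) *
          (1 / N) ^ (3 * (p:ℝ) / 2) := by positivity
      rw [← Real.log_le_log_iff (by positivity) hRHSpos, Real.log_rpow hMpos]
      have hlog4 : Real.log 4 = 2 * (Real.log 2) := by
        rw [show (4:ℝ) = 2 ^ 2 by norm_num, Real.log_pow]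
        push_cast; ring
      have hlogC : Real.log C = (Real.log H) - (Real.log (1 - β)) := Real.log_div (ne_of_gt hH) (ne_of_gt h1β)
      have hlogA : Real.log A = (p:ℝ) * (2 * (Real.log 2)) + (Real.log H) + ((p:ℝ) + 1) * (Real.log R0) - (Real.log (1 - β)) := by
        rw [hA, Real.log_div (by positivity) (ne_of_gt h1β),
          Real.log_mul (by positivity) (by positivity),
          Real.log_mul (by positivity) (ne_of_gt hH),
          Real.log_pow, Real.log_pow, hlog4]
        push_cast; ring
      have hlogw : Real.log ((N / ((p:ℝ) + 1)) ^ (-e)) = -e * ((Real.log N) - (Real.log ((p:ℝ) + 1))) := by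
        rw [Real.log_rpow hxpos, Real.log_div (ne_of_gt hNpos) (ne_of_gt hp1)]
      have hlogM : Real.log M = (Real.log 2) + (1/(p:ℝ)) * ((Real.log H) - (Real.log (1 - β))) +
          ((p:ℝ) * (2 * (Real.log 2)) + (Real.log H) + ((p:ℝ) + 1) * (Real.log R0) - (Real.log (1 - β))) + (-e) * ((Real.log N) - (Real.log ((p:ℝ) + 1))) - (Real.log N) := by
        rw [hM, Real.log_div (by positivity) (ne_of_gt hNpos),
          Real.log_mul (by positivity) (by positivity),
          Real.log_mul (by norm_num) (ne_of_gt hCp),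
          Real.log_mul (ne_of_gt hApos) (ne_of_gt hwpos),
          Real.log_rpow hC, hlogC, hlogA, hlogw]
        ring
      have hlogRHS : Real.log (4 ^ p * ((p:ℝ) + 1) ^ E * (H * R0 ^ p / (1 - β)) *
          (1 / N) ^ (3 * (p:ℝ) / 2)) =
          (p:ℝ) * (2 * (Real.log 2)) + E * (Real.log ((p:ℝ) + 1)) + ((Real.log H) + (p:ℝ) * (Real.log R0) - (Real.log (1 - β))) + (3 * (p:ℝ) / 2) * (-(Real.log N)) := by
        rw [Real.log_mul (by positivity) (by positivity),
          Real.log_mul (by positivity) (by positivity),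
          Real.log_mul (by positivity) (by positivity),
          Real.log_rpow (by positivity : (0:ℝ) < 1 / N),
          Real.log_rpow hp1,
          Real.log_div (by positivity) (ne_of_gt h1β),
          Real.log_mul (ne_of_gt hH) (by positivity),
          Real.log_pow, Real.log_pow, hlog4, one_div, Real.log_inv]
      rw [hlogM, hlogRHS]
      have hL2 : 0 ≤ (Real.log 2) := Real.log_nonneg (by norm_num)
      have hident : (p:ℝ) * (2 * (Real.log 2)) + E * (Real.log ((p:ℝ) + 1)) + ((Real.log H) + (p:ℝ) * (Real.log R0) - (Real.log (1 - β))) +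
          (3 * (p:ℝ) / 2) * (-(Real.log N)) -
          r * ((Real.log 2) + (1/(p:ℝ)) * ((Real.log H) - (Real.log (1 - β))) +
            ((p:ℝ) * (2 * (Real.log 2)) + (Real.log H) + ((p:ℝ) + 1) * (Real.log R0) - (Real.log (1 - β))) + (-e) * ((Real.log N) - (Real.log ((p:ℝ) + 1))) - (Real.log N)) =
          ((p:ℝ) / ((p:ℝ) + 1)) * (Real.log 2) := by
        rw [hr, hE, he]
        field_simp
        ring
      nlinarith [mul_nonneg (le_of_lt (div_pos hp0 hp1)) hL2]
  calc G i ≤ 2 * g i := hGg i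
    _ ≤ 2 * M ^ r := by linarith
    _ ≤ 2 * 4 ^ p * ((p:ℝ) + 1) ^ E * (H * R0 ^ p / (1 - β)) *
        (1 / N) ^ (3 * (p:ℝ) / 2) := by nlinarith
end
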